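/- arXiv:1208.5984 — 7 statements merged into one kernel-verified Lean document; each statement's English description precedes it below -/
import Mathlib

section
/- Runge-type theorem for the wave equation: let w be C² on the closed square R̄ = {(x,t) : |x|+|t| ≤ 2b} and satisfy w_xx - w_tt = 0 in its interior. Then for every ε > 0 there exists a finite linear combination P of the wave polynomials p_0, p_1, p_2, … such that sup_{(x,t) ∈ R̄} |w(x,t) - P(x,t)| < ε. -/
/-!
In characteristic coordinates the wave equation says that the second derivative of `w` in the
directions `(1, 1)` and `(1, -1)` vanishes (the Hessian is symmetric), so the second difference
of `w` over every characteristic parallelogram inside the open square vanishes. With the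
parallelogram spanned by `0`, `((x+t)/2, (x+t)/2)` and `((x-t)/2, -(x-t)/2)` this is the
d'Alembert form `w(x, t) = φ(x + t) + ψ(x - t)`, which extends to the closed square by continuity.
Weierstrass approximates `φ` and `ψ` on `[-2b, 2b]` by polynomials `P`, `Q`, and
`P(x + t) + Q(x - t)` is a combination of wave polynomials since `(x ± t)^n = p_{2n-1} ± p_{2n}`.
-/

open Set Submodule Filter Topology

/-- The wave polynomials: `p 0 = 1`,
`p (2n-1) (x,t) = ((x+t)^n + (x-t)^n)/2`, `p (2n) (x,t) = ((x+t)^n - (x-t)^n)/2`. -/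
noncomputable def wavePoly (m : ℕ) (x t : ℝ) : ℝ :=
  if m = 0 then 1
  else if m % 2 = 1 then ((x + t) ^ ((m + 1) / 2) + (x - t) ^ ((m + 1) / 2)) / 2
  else ((x + t) ^ (m / 2) - (x - t) ^ (m / 2)) / 2

theorem exists_eq_sum_range_of_mem_span_range {R M : Type*} [Semiring R] [AddCommMonoid M]
    [Module R M] {v : ℕ → M} {f : M} (hf : f ∈ span R (range v)) :
    ∃ (N : ℕ) (a : ℕ → R), f = ∑ m ∈ Finset.range (N + 1), a m • v m := by
  obtain ⟨c, rfl⟩ := Finsupp.mem_span_range_iff_exists_finsupp.mp hf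
  refine ⟨c.support.sup id, c, Finsupp.sum_of_support_subset c (fun m hm => ?_) _ (by simp)⟩
  exact Finset.mem_range_succ_iff.mpr (Finset.le_sup (f := id) hm)

theorem wavePoly_two_mul_add_one (k : ℕ) :
    wavePoly (2 * k + 1) = fun x t => ((x + t) ^ (k + 1) + (x - t) ^ (k + 1)) / 2 := by
  ext x t
  simp [wavePoly, show (2 * k + 1 + 1) / 2 = k + 1 by omega]

theorem wavePoly_two_mul_add_two (k : ℕ) :
    wavePoly (2 * k + 2) = fun x t => ((x + t) ^ (k + 1) - (x - t) ^ (k + 1)) / 2 := by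
  ext x t
  simp [wavePoly, show (2 * k + 2) / 2 = k + 1 by omega]

def waveSpan : Submodule ℝ (ℝ → ℝ → ℝ) := span ℝ (range wavePoly)

theorem wavePoly_mem_waveSpan (m : ℕ) : wavePoly m ∈ waveSpan := subset_span ⟨m, rfl⟩

theorem pow_add_mem_waveSpan (n : ℕ) : (fun x t : ℝ => (x + t) ^ n) ∈ waveSpan := by
  cases n with
  | zero => convert wavePoly_mem_waveSpan 0 using 1; ext; simp [wavePoly]
  | succ k =>
    convert add_mem (wavePoly_mem_waveSpan (2 * k + 1)) (wavePoly_mem_waveSpan (2 * k + 2)) using 1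
    rw [wavePoly_two_mul_add_one, wavePoly_two_mul_add_two]
    ext x t; simp only [Pi.add_apply]; ring

theorem pow_sub_mem_waveSpan (n : ℕ) : (fun x t : ℝ => (x - t) ^ n) ∈ waveSpan := by
  cases n with
  | zero => convert wavePoly_mem_waveSpan 0 using 1; ext; simp [wavePoly]
  | succ k =>
    convert sub_mem (wavePoly_mem_waveSpan (2 * k + 1)) (wavePoly_mem_waveSpan (2 * k + 2)) using 1
    rw [wavePoly_two_mul_add_one, wavePoly_two_mul_add_two]
    ext x t; simp only [Pi.sub_apply]; ring

theorem polynomial_eval_mem_waveSpan {g : ℝ → ℝ → ℝ} (hg : ∀ n, (fun x t => g x t ^ n) ∈ waveSpan)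
    (P : Polynomial ℝ) : (fun x t => P.eval (g x t)) ∈ waveSpan := by
  induction P using Polynomial.induction_on' with
  | add P Q hP hQ => convert add_mem hP hQ using 1; ext; simp
  | monomial n c => convert smul_mem waveSpan c (hg n) using 1; ext; simp

theorem eval_add_add_eval_sub_mem_waveSpan (P Q : Polynomial ℝ) :
    (fun x t => P.eval (x + t) + Q.eval (x - t)) ∈ waveSpan :=
  add_mem (polynomial_eval_mem_waveSpan pow_add_mem_waveSpan P)
    (polynomial_eval_mem_waveSpan pow_sub_mem_waveSpan Q)

section Calculus

variable {E F : Type*} [NormedAddCommGroup E] [NormedSpace ℝ E] [NormedAddCommGroup F]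
  [NormedSpace ℝ F]

theorem eq_of_forall_mem_Icc_hasDerivAt_zero {φ : ℝ → F}
    (h : ∀ s ∈ Icc (0 : ℝ) 1, HasDerivAt φ 0 s) : φ 1 = φ 0 :=
  constant_of_has_deriv_right_zero (fun s hs => (h s hs).continuousAt.continuousWithinAt)
    (fun s hs => (h s (Ico_subset_Icc_self hs)).hasDerivWithinAt) 1 (right_mem_Icc.2 zero_le_one)

theorem hasDerivAt_comp_add_smul {g : E → F} {p v : E} {s : ℝ}
    (hg : DifferentiableAt ℝ g (p + s • v)) :
    HasDerivAt (fun r : ℝ => g (p + r • v)) (fderiv ℝ g (p + s • v) v) s := by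
  have hline : HasDerivAt (fun r : ℝ => p + r • v) v s := by
    simpa using ((hasDerivAt_id s).smul_const v).const_add p
  exact hg.hasFDerivAt.comp_hasDerivAt s hline

theorem deriv_deriv_comp_add_smul {g : E → F} {U : Set E} (hU : IsOpen U)
    (hg : ContDiffOn ℝ 2 g U) {p v : E} {r : ℝ} (hr : p + r • v ∈ U) :
    deriv (fun s => deriv (fun s' => g (p + s' • v)) s) r =
      fderiv ℝ (fderiv ℝ g) (p + r • v) v v := by
  have hdg : DifferentiableOn ℝ g U := hg.differentiableOn (by norm_num)
  have hdg' : DifferentiableOn ℝ (fderiv ℝ g) U :=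
    (hg.fderiv_of_isOpen hU (m := 1) (by norm_num)).differentiableOn one_ne_zero
  have hline : ∀ᶠ s in 𝓝 r, p + s • v ∈ U :=
    (continuous_const.add (continuous_id.smul continuous_const)).continuousAt.preimage_mem_nhds
      (hU.mem_nhds hr)
  have h := (hasDerivAt_comp_add_smul (hdg'.differentiableAt (hU.mem_nhds hr))).clm_apply
    (hasDerivAt_const r v)
  simp only [map_zero, add_zero] at h
  exact (h.congr_of_eventuallyEq (hline.mono fun s hs =>
    (hasDerivAt_comp_add_smul (hdg.differentiableAt (hU.mem_nhds hs))).deriv)).deriv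

theorem Convex.add_smul_add_smul_mem {V : Set E} (hV : Convex ℝ V) {p a b : E} (hp : p ∈ V)
    (ha : p + a ∈ V) (hb : p + b ∈ V) (hab : p + a + b ∈ V) {s r : ℝ} (hs : s ∈ Icc (0 : ℝ) 1)
    (hr : r ∈ Icc (0 : ℝ) 1) : p + s • a + r • b ∈ V := by
  refine hV.add_smul_mem (hV.add_smul_mem hp ha hs) ?_ hr
  rw [add_right_comm]
  exact hV.add_smul_mem hb (by rwa [add_right_comm]) hs

theorem sub_eq_sub_of_fderiv_fderiv_eq_zero {f : E → F} {V : Set E} (hVo : IsOpen V)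
    (hVc : Convex ℝ V) (hf : ContDiffOn ℝ 2 f V) {p a b : E}
    (hmixed : ∀ q ∈ V, fderiv ℝ (fderiv ℝ f) q b a = 0) (hp : p ∈ V) (ha : p + a ∈ V)
    (hb : p + b ∈ V) (hab : p + a + b ∈ V) :
    f (p + a + b) - f (p + b) = f (p + a) - f p := by
  have hmem := fun {s r : ℝ} => hVc.add_smul_add_smul_mem hp ha hb hab (s := s) (r := r)
  have hdf : DifferentiableOn ℝ f V := hf.differentiableOn (by norm_num)
  have hdf' : DifferentiableOn ℝ (fderiv ℝ f) V :=
    (hf.fderiv_of_isOpen hVo (m := 1) (by norm_num)).differentiableOn one_ne_zero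
  have hslide : ∀ s ∈ Icc (0 : ℝ) 1,
      fderiv ℝ f (p + s • a + b) a = fderiv ℝ f (p + s • a) a := by
    intro s hs
    have hconst := eq_of_forall_mem_Icc_hasDerivAt_zero
      (φ := fun r => fderiv ℝ f (p + s • a + r • b) a) fun r hr => by
        have hV := hmem hs hr
        simpa [hmixed _ hV] using (hasDerivAt_comp_add_smul
          (hdf'.differentiableAt (hVo.mem_nhds hV))).clm_apply (hasDerivAt_const r a)
    simpa using hconst
  have hconst := eq_of_forall_mem_Icc_hasDerivAt_zero
    (φ := fun s => f (p + b + s • a) - f (p + s • a)) fun s hs => by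
      have hV₀ := hmem hs (left_mem_Icc.2 zero_le_one)
      have hV₁ := hmem hs (right_mem_Icc.2 zero_le_one)
      simp only [zero_smul, add_zero, one_smul] at hV₀ hV₁
      rw [add_right_comm] at hV₁
      have := (hasDerivAt_comp_add_smul (hdf.differentiableAt (hVo.mem_nhds hV₁))).sub
        (hasDerivAt_comp_add_smul (hdf.differentiableAt (hVo.mem_nhds hV₀)))
      rwa [add_right_comm, hslide s hs, sub_self] at this
  rw [sub_eq_sub_iff_sub_eq_sub, add_right_comm]
  simpa using hconst

theorem mem_closure_of_forall_smul_mem {V : Set E} {p : E}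
    (h : ∀ θ ∈ Ioo (0 : ℝ) 1, θ • p ∈ V) : p ∈ closure V := by
  have hc : Continuous fun θ : ℝ => θ • p := by fun_prop
  have hlim : Tendsto (fun θ : ℝ => θ • p) (𝓝[<] 1) (𝓝 p) := by
    simpa using (hc.tendsto 1).mono_left nhdsWithin_le_nhds
  exact mem_closure_of_tendsto hlim (eventually_of_mem (Ioo_mem_nhdsLT zero_lt_one) h)

end Calculus

theorem fderiv_fderiv_characteristic_eq_zero {f : ℝ × ℝ → ℝ} {V : Set (ℝ × ℝ)} (hVo : IsOpen V)
    (hf : ContDiffOn ℝ 2 f V)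
    (hwave : ∀ x t : ℝ, (x, t) ∈ V → deriv (fun y => deriv (fun z => f (z, t)) y) x =
      deriv (fun s => deriv (fun z => f (x, z)) s) t)
    {q : ℝ × ℝ} (hq : q ∈ V) (α β : ℝ) : fderiv ℝ (fderiv ℝ f) q (β, -β) (α, α) = 0 := by
  obtain ⟨x, t⟩ := q
  set f'' := fderiv ℝ (fderiv ℝ f) (x, t)
  have hxx : f'' (1, 0) (1, 0) = f'' (0, 1) (0, 1) := by
    have hx := deriv_deriv_comp_add_smul hVo hf (p := (0, t)) (v := (1, 0)) (r := x)
      (by simpa using hq)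
    have ht := deriv_deriv_comp_add_smul hVo hf (p := (x, 0)) (v := (0, 1)) (r := t)
      (by simpa using hq)
    simp only [Prod.smul_mk, smul_eq_mul, mul_one, mul_zero, Prod.mk_add_mk, zero_add,
      add_zero] at hx ht
    rw [← hx, ← ht, hwave x t hq]
  have hxt : f'' (1, 0) (0, 1) = f'' (0, 1) (1, 0) :=
    (hf.contDiffAt (hVo.mem_nhds hq)).isSymmSndFDerivAt (by simp) _ _
  have hβ : ((β, -β) : ℝ × ℝ) = β • ((1, 0) - (0, 1)) := by simp
  have hα : ((α, α) : ℝ × ℝ) = α • ((1, 0) + (0, 1)) := by simp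
  simp only [hβ, hα, map_smul, map_sub, map_add, sub_apply,
    smul_apply, smul_eq_mul, hxx, hxt]
  ring

def diamond (r : ℝ) : Set (ℝ × ℝ) := {p | |p.1| + |p.2| ≤ r}

def openDiamond (r : ℝ) : Set (ℝ × ℝ) := {p | |p.1| + |p.2| < r}

theorem isOpen_openDiamond (r : ℝ) : IsOpen (openDiamond r) :=
  isOpen_lt (by fun_prop) continuous_const

theorem convex_openDiamond (r : ℝ) : Convex ℝ (openDiamond r) := by
  have hℓ : ConvexOn ℝ univ fun p : ℝ × ℝ => |p.1| + |p.2| :=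
    (convexOn_univ_norm.comp_linearMap (LinearMap.fst ℝ ℝ ℝ)).add
      (convexOn_univ_norm.comp_linearMap (LinearMap.snd ℝ ℝ ℝ))
  simpa [openDiamond] using hℓ.convex_lt r

theorem openDiamond_subset_diamond (r : ℝ) : openDiamond r ⊆ diamond r :=
  fun p hp => show |p.1| + |p.2| ≤ r from le_of_lt hp

theorem diamond_subset_closure_openDiamond {r : ℝ} (hr : 0 < r) :
    diamond r ⊆ closure (openDiamond r) := by
  intro p hp
  refine mem_closure_of_forall_smul_mem fun θ hθ => ?_
  have : θ * (|p.1| + |p.2|) < r := by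
    nlinarith [hθ.1, hθ.2, abs_nonneg p.1, abs_nonneg p.2, hp.out]
  simpa [openDiamond, abs_mul, abs_of_pos hθ.1, mul_add] using this

theorem abs_half_add_abs_half (u : ℝ) : |u / 2| + |u / 2| = |u| := by
  rw [abs_div, abs_two]; ring

theorem exists_dAlembert_of_wave {f : ℝ × ℝ → ℝ} {r : ℝ} (hr : 0 < r)
    (hf : ContDiffOn ℝ 2 f (diamond r))
    (hwave : ∀ x t : ℝ, (x, t) ∈ openDiamond r →
      deriv (fun y => deriv (fun z => f (z, t)) y) x =
        deriv (fun s => deriv (fun z => f (x, z)) s) t) :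
    ∃ φ ψ : ℝ → ℝ, ContinuousOn φ (Icc (-r) r) ∧ ContinuousOn ψ (Icc (-r) r) ∧
      ∀ p ∈ diamond r, f p = φ (p.1 + p.2) + ψ (p.1 - p.2) := by
  have hIcc : ∀ u ∈ Icc (-r) r, |u / 2| + |u / 2| ≤ r := fun u hu => by
    rw [abs_half_add_abs_half]; exact abs_le.mpr hu
  set φ : ℝ → ℝ := fun u => f (u / 2, u / 2)
  set ψ : ℝ → ℝ := fun v => f (v / 2, -(v / 2)) - f 0
  have hφ : ContinuousOn φ (Icc (-r) r) := hf.continuousOn.comp (by fun_prop) hIcc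
  have hψ : ContinuousOn ψ (Icc (-r) r) :=
    (hf.continuousOn.comp (by fun_prop) fun v hv => by simpa [diamond] using hIcc v hv).sub
      continuousOn_const
  refine ⟨φ, ψ, hφ, hψ, ?_⟩
  have hcont : ContinuousOn (fun p : ℝ × ℝ => φ (p.1 + p.2) + ψ (p.1 - p.2)) (diamond r) :=
    (hφ.comp (by fun_prop) fun p hp => abs_le.mp ((abs_add_le _ _).trans hp)).add
      (hψ.comp (by fun_prop) fun p hp => abs_le.mp ((abs_sub _ _).trans hp))
  have hopen : EqOn f (fun p => φ (p.1 + p.2) + ψ (p.1 - p.2)) (openDiamond r) := by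
    intro p (hp : |p.1| + |p.2| < r)
    have hf' := hf.mono (openDiamond_subset_diamond r)
    have hsum : (0 : ℝ × ℝ) + ((p.1 + p.2) / 2, (p.1 + p.2) / 2) +
        ((p.1 - p.2) / 2, -((p.1 - p.2) / 2)) = p := by
      ext <;> simp <;> ring
    have key := sub_eq_sub_of_fderiv_fderiv_eq_zero (isOpen_openDiamond r)
      (convex_openDiamond r) hf' (p := 0) (a := ((p.1 + p.2) / 2, (p.1 + p.2) / 2))
      (b := ((p.1 - p.2) / 2, -((p.1 - p.2) / 2)))
      (fun q hq => fderiv_fderiv_characteristic_eq_zero (isOpen_openDiamond r) hf' hwave hq _ _)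
      (show |0| + |0| < r by simpa using hr)
      (show |_| + |_| < r by
        rw [zero_add, abs_half_add_abs_half]; exact (abs_add_le _ _).trans_lt hp)
      (show |_| + |_| < r by
        rw [zero_add, abs_neg, abs_half_add_abs_half]; exact (abs_sub _ _).trans_lt hp)
      (by rw [hsum]; exact hp)
    rw [hsum, zero_add, zero_add] at key
    simp only [φ, ψ]
    linarith
  exact hopen.of_subset_closure hf.continuousOn hcont (openDiamond_subset_diamond r)
    (diamond_subset_closure_openDiamond hr)

/-- Runge-type theorem for the wave equation: a `C²` solution of the wave
equation on the closed square `|x| + |t| ≤ 2b` can be uniformly approximated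
there by finite linear combinations of the wave polynomials. -/
theorem stmt_5 (b : ℝ) (hb : 0 < b) (w : ℝ → ℝ → ℝ)
    (hw : ContDiffOn ℝ 2 (fun p : ℝ × ℝ => w p.1 p.2) {p : ℝ × ℝ | |p.1| + |p.2| ≤ 2 * b})
    (hwave : ∀ x t : ℝ, |x| + |t| < 2 * b →
        deriv (fun y => deriv (fun z => w z t) y) x =
          deriv (fun s => deriv (fun z => w x z) s) t) :
    ∀ ε > 0, ∃ (N : ℕ) (a : ℕ → ℝ), ∀ x t : ℝ, |x| + |t| ≤ 2 * b →
      |w x t - ∑ m ∈ Finset.range (N + 1), a m * wavePoly m x t| < ε := by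
  intro ε hε
  obtain ⟨φ, ψ, hφ, hψ, hrepr⟩ := exists_dAlembert_of_wave (by positivity : 0 < 2 * b) hw hwave
  obtain ⟨P, hP⟩ := exists_polynomial_near_of_continuousOn _ _ φ hφ (ε / 2) (half_pos hε)
  obtain ⟨Q, hQ⟩ := exists_polynomial_near_of_continuousOn _ _ ψ hψ (ε / 2) (half_pos hε)
  obtain ⟨N, a, hNa⟩ :=
    exists_eq_sum_range_of_mem_span_range (eval_add_add_eval_sub_mem_waveSpan P Q)
  refine ⟨N, a, fun x t hxt => ?_⟩
  have hPQ : P.eval (x + t) + Q.eval (x - t) =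
      ∑ m ∈ Finset.range (N + 1), a m * wavePoly m x t := by
    simpa using congrFun (congrFun hNa x) t
  have hP' := abs_lt.mp (hP (x + t) (abs_le.mp ((abs_add_le x t).trans hxt)))
  have hQ' := abs_lt.mp (hQ (x - t) (abs_le.mp ((abs_sub x t).trans hxt)))
  rw [show w x t = φ (x + t) + ψ (x - t) from hrepr (x, t) hxt, ← hPQ, abs_lt]
  constructor <;> linarith [hP'.1, hP'.2, hQ'.1, hQ'.2]
end

section
/- If φ(x) = ∑_{n≥0} α_n x^n and ψ(x) = ∑_{n≥0} β_n x^n are power series uniformly convergent on [-b,b] with α_0 = β_0, then the solution w of the Goursat problem for the wave equation with data φ on x - t = 0 and ψ on x + t = 0 equals w(x,t) = α_0 + ∑_{n≥1} ((α_n+β_n)/2^n) p_{2n-1}(x,t) + ∑_{n≥1} ((α_n-β_n)/2^n) p_{2n}(x,t), with uniform convergence on the square {|x|+|t| ≤ 2b}. -/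
open Filter

/-- If `φ = ∑ α_n x^n` and `ψ = ∑ β_n x^n` converge uniformly on `[-b,b]` with
`α 0 = β 0`, then the Goursat solution `w(x,t) = φ((x+t)/2) + ψ((x-t)/2) - φ 0`
equals `α 0 + ∑_{n≥1} ((α_n+β_n)/2^n) p_{2n-1} + ∑_{n≥1} ((α_n-β_n)/2^n) p_{2n}`,
uniformly on the square `|x|+|t| ≤ 2b`. -/
theorem stmt_6 (b : ℝ) (hb : 0 < b) (α β : ℕ → ℝ) (φ ψ : ℝ → ℝ)
    (h0 : α 0 = β 0)
    (hφ : TendstoUniformlyOn (fun N x => ∑ n ∈ Finset.range (N + 1), α n * x ^ n) φ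
      atTop (Set.Icc (-b) b))
    (hψ : TendstoUniformlyOn (fun N x => ∑ n ∈ Finset.range (N + 1), β n * x ^ n) ψ
      atTop (Set.Icc (-b) b)) :
    TendstoUniformlyOn
      (fun (N : ℕ) (p : ℝ × ℝ) =>
        α 0 + ∑ n ∈ Finset.Icc 1 N,
          ((α n + β n) / 2 ^ n * (((p.1 + p.2) ^ n + (p.1 - p.2) ^ n) / 2) +
            (α n - β n) / 2 ^ n * (((p.1 + p.2) ^ n - (p.1 - p.2) ^ n) / 2)))
      (fun p : ℝ × ℝ => φ ((p.1 + p.2) / 2) + ψ ((p.1 - p.2) / 2) - φ 0)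
      atTop {p : ℝ × ℝ | |p.1| + |p.2| ≤ 2 * b} := by
  have hmem0 : (0:ℝ) ∈ Set.Icc (-b) b := ⟨by linarith, by linarith⟩
  have hsum0 : ∀ N, ∑ n ∈ Finset.range (N+1), α n * (0:ℝ)^n = α 0 := by
    intro N; rw [Finset.sum_range_succ']; simp
  have hφ0 : φ 0 = α 0 := by
    have h1 := hφ.tendsto_at hmem0
    have h2 : Tendsto (fun N : ℕ => ∑ n ∈ Finset.range (N+1), α n * (0:ℝ)^n)
        atTop (nhds (α 0)) := by simp only [hsum0]; exact tendsto_const_nhds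
    exact tendsto_nhds_unique h1 h2
  set S : Set (ℝ × ℝ) := {p : ℝ × ℝ | |p.1| + |p.2| ≤ 2 * b} with hS
  set u : ℝ × ℝ → ℝ := fun p => (p.1 + p.2) / 2 with hu
  set v : ℝ × ℝ → ℝ := fun p => (p.1 - p.2) / 2 with hv
  have hSu : S ⊆ u ⁻¹' (Set.Icc (-b) b) := by
    intro p hp
    have h1 : |p.1 + p.2| ≤ |p.1| + |p.2| := abs_add_le _ _
    have h2 : |p.1| + |p.2| ≤ 2 * b := hp
    have h3 := abs_le.mp (le_trans h1 h2)
    exact ⟨by simp only [hu]; linarith [h3.1], by simp only [hu]; linarith [h3.2]⟩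
  have hSv : S ⊆ v ⁻¹' (Set.Icc (-b) b) := by
    intro p hp
    have h1 : |p.1 - p.2| ≤ |p.1| + |p.2| := abs_sub _ _
    have h2 : |p.1| + |p.2| ≤ 2 * b := hp
    have h3 := abs_le.mp (le_trans h1 h2)
    exact ⟨by simp only [hv]; linarith [h3.1], by simp only [hv]; linarith [h3.2]⟩
  have hφu : TendstoUniformlyOn
      (fun N p => ∑ n ∈ Finset.range (N + 1), α n * (u p) ^ n)
      (fun p => φ (u p)) atTop S :=
    (hφ.comp u).mono hSu
  have hψv : TendstoUniformlyOn
      (fun N p => ∑ n ∈ Finset.range (N + 1), β n * (v p) ^ n)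
      (fun p => ψ (v p)) atTop S :=
    (hψ.comp v).mono hSv
  have hconst : TendstoUniformlyOn (fun (_ : ℕ) (_ : ℝ × ℝ) => α 0)
      (fun _ => α 0) atTop S := tendsto_const_nhds.tendstoUniformlyOn_const S
  have hmain := (hφu.add hψv).sub hconst
  -- rewrite the partial sums
  have hFeq : (fun (N : ℕ) (p : ℝ × ℝ) =>
        α 0 + ∑ n ∈ Finset.Icc 1 N,
          ((α n + β n) / 2 ^ n * (((p.1 + p.2) ^ n + (p.1 - p.2) ^ n) / 2) +
            (α n - β n) / 2 ^ n * (((p.1 + p.2) ^ n - (p.1 - p.2) ^ n) / 2)))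
      = (fun (N : ℕ) (p : ℝ × ℝ) =>
          ((∑ n ∈ Finset.range (N + 1), α n * (u p) ^ n) +
            ∑ n ∈ Finset.range (N + 1), β n * (v p) ^ n) - α 0) := by
    funext N p
    have hrange : Finset.range (N + 1) = insert 0 (Finset.Icc 1 N) := by
      ext m
      simp only [Finset.mem_range, Finset.mem_insert, Finset.mem_Icc]
      omega
    have h0notin : (0 : ℕ) ∉ Finset.Icc 1 N := by simp
    rw [hrange, Finset.sum_insert h0notin, Finset.sum_insert h0notin]
    have hterm : ∀ n ∈ Finset.Icc 1 N,
        ((α n + β n) / 2 ^ n * (((p.1 + p.2) ^ n + (p.1 - p.2) ^ n) / 2) +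
          (α n - β n) / 2 ^ n * (((p.1 + p.2) ^ n - (p.1 - p.2) ^ n) / 2))
        = α n * (u p) ^ n + β n * (v p) ^ n := by
      intro n _
      have h2 : (2:ℝ) ^ n ≠ 0 := by positivity
      simp only [hu, hv, div_pow]
      field_simp
      ring
    rw [Finset.sum_congr rfl hterm, Finset.sum_add_distrib]
    simp only [hu, hv, pow_zero, mul_one, h0]
    ring
  rw [hFeq]
  have hfeq : (fun p : ℝ × ℝ => φ ((p.1 + p.2) / 2) + ψ ((p.1 - p.2) / 2) - φ 0)
      = (fun p : ℝ × ℝ => (φ (u p) + ψ (v p)) - α 0) := by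
    funext p; simp only [hu, hv, hφ0]
  rw [hfeq]
  exact hmain
end

section
/- Let f be C² and nonvanishing on [a,b] with f'' = q f. For the system φ_k of recursive integrals built from f with base point x₀, the generalized derivatives satisfy d₁^f φ_k = k ψ_{k-1} for k ≥ 1 and d₂^f φ_k = k(k-1) φ_{k-2} for k ≥ 2, where d₁^f g = f·(g/f)' and d₂^f g = (1/f)·(f·d₁^f g)'; moreover d₁^f φ_0 = d₂^f φ_0 = d₂^f φ_1 = 0. -/
/-- The recursive integrals `X̃⁽ⁿ⁾`. -/
noncomputable def Xt (f : ℝ → ℂ) (x₀ : ℝ) : ℕ → ℝ → ℂ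
  | 0 => fun _ => 1
  | n + 1 => fun x => (n + 1 : ℂ) * ∫ s in x₀..x, Xt f x₀ n s * (f s ^ 2) ^ ((-1 : ℤ) ^ n)

/-- The recursive integrals `X⁽ⁿ⁾`. -/
noncomputable def Xr (f : ℝ → ℂ) (x₀ : ℝ) : ℕ → ℝ → ℂ
  | 0 => fun _ => 1
  | n + 1 => fun x => (n + 1 : ℂ) * ∫ s in x₀..x, Xr f x₀ n s * (f s ^ 2) ^ ((-1 : ℤ) ^ (n + 1))

/-- The system `φ_k`. -/
noncomputable def phiSys (f : ℝ → ℂ) (x₀ : ℝ) (k : ℕ) (x : ℝ) : ℂ :=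
  if k % 2 = 1 then f x * Xr f x₀ k x else f x * Xt f x₀ k x

/-- The dual system `ψ_k`: `ψ_k = X̃⁽ᵏ⁾/f` for `k` odd, `ψ_k = X⁽ᵏ⁾/f` for `k` even. -/
noncomputable def psiSys (f : ℝ → ℂ) (x₀ : ℝ) (k : ℕ) (x : ℝ) : ℂ :=
  if k % 2 = 1 then Xt f x₀ k x / f x else Xr f x₀ k x / f x

open MeasureTheory Set intervalIntegral

variable {a b x₀ : ℝ} {f : ℝ → ℂ}

lemma zpowCont (hf : ContinuousOn f (Icc a b)) (hf0 : ∀ x ∈ Icc a b, f x ≠ 0) (e : ℤ) :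
    ContinuousOn (fun s => (f s ^ 2) ^ e) (Icc a b) :=
  (hf.pow 2).zpow₀ e (fun x hx => Or.inl (pow_ne_zero 2 (hf0 x hx)))

lemma contX (hab : a ≤ b) (hx₀ : x₀ ∈ Icc a b) (hf : ContinuousOn f (Icc a b))
    (hf0 : ∀ x ∈ Icc a b, f x ≠ 0) (n : ℕ) :
    ContinuousOn (Xr f x₀ n) (Icc a b) ∧ ContinuousOn (Xt f x₀ n) (Icc a b) := by
  have hu : uIcc a b = Icc a b := uIcc_of_le hab
  induction n with
  | zero => exact ⟨continuousOn_const, continuousOn_const⟩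
  | succ n ih =>
    constructor
    · show ContinuousOn (fun x => (n + 1 : ℂ) *
        ∫ s in x₀..x, Xr f x₀ n s * (f s ^ 2) ^ ((-1 : ℤ) ^ (n + 1))) (Icc a b)
      apply continuousOn_const.mul
      rw [← hu]
      apply continuousOn_primitive_interval'
      · apply ContinuousOn.intervalIntegrable
        rw [hu]; exact ih.1.mul (zpowCont hf hf0 _)
      · rwa [hu]
    · show ContinuousOn (fun x => (n + 1 : ℂ) *
        ∫ s in x₀..x, Xt f x₀ n s * (f s ^ 2) ^ ((-1 : ℤ) ^ n)) (Icc a b)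
      apply continuousOn_const.mul
      rw [← hu]
      apply continuousOn_primitive_interval'
      · apply ContinuousOn.intervalIntegrable
        rw [hu]; exact ih.2.mul (zpowCont hf hf0 _)
      · rwa [hu]
lemma hasDerivXr (hab : a ≤ b) (hx₀ : x₀ ∈ Icc a b) (hf : ContinuousOn f (Icc a b))
    (hf0 : ∀ x ∈ Icc a b, f x ≠ 0) (n : ℕ) {x : ℝ} (hx : x ∈ Ioo a b) :
    HasDerivAt (Xr f x₀ (n + 1))
      ((n + 1 : ℂ) * (Xr f x₀ n x * (f x ^ 2) ^ ((-1 : ℤ) ^ (n + 1)))) x := by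
  set g : ℝ → ℂ := fun s => Xr f x₀ n s * (f s ^ 2) ^ ((-1 : ℤ) ^ (n + 1)) with hg_def
  have hg : ContinuousOn g (Icc a b) :=
    (contX hab hx₀ hf hf0 n).1.mul (zpowCont hf hf0 _)
  have hxI : x ∈ Icc a b := Ioo_subset_Icc_self hx
  have hsub : uIcc x₀ x ⊆ Icc a b := by
    rw [← uIcc_of_le hab]; exact uIcc_subset_uIcc (by rwa [uIcc_of_le hab]) (by rwa [uIcc_of_le hab])
  have hint : IntervalIntegrable g volume x₀ x := (hg.mono hsub).intervalIntegrable
  have hmeas : StronglyMeasurableAtFilter g (nhds x) :=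
    (hg.mono Ioo_subset_Icc_self).stronglyMeasurableAtFilter isOpen_Ioo x hx
  have hcont : ContinuousAt g x := (hg.mono Ioo_subset_Icc_self).continuousAt (isOpen_Ioo.mem_nhds hx)
  have h := (integral_hasDerivAt_right hint hmeas hcont).const_mul (n + 1 : ℂ)
  exact h

lemma hasDerivXt (hab : a ≤ b) (hx₀ : x₀ ∈ Icc a b) (hf : ContinuousOn f (Icc a b))
    (hf0 : ∀ x ∈ Icc a b, f x ≠ 0) (n : ℕ) {x : ℝ} (hx : x ∈ Ioo a b) :
    HasDerivAt (Xt f x₀ (n + 1))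
      ((n + 1 : ℂ) * (Xt f x₀ n x * (f x ^ 2) ^ ((-1 : ℤ) ^ n))) x := by
  set g : ℝ → ℂ := fun s => Xt f x₀ n s * (f s ^ 2) ^ ((-1 : ℤ) ^ n) with hg_def
  have hg : ContinuousOn g (Icc a b) :=
    (contX hab hx₀ hf hf0 n).2.mul (zpowCont hf hf0 _)
  have hxI : x ∈ Icc a b := Ioo_subset_Icc_self hx
  have hsub : uIcc x₀ x ⊆ Icc a b := by
    rw [← uIcc_of_le hab]; exact uIcc_subset_uIcc (by rwa [uIcc_of_le hab]) (by rwa [uIcc_of_le hab])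
  have hint : IntervalIntegrable g volume x₀ x := (hg.mono hsub).intervalIntegrable
  have hmeas : StronglyMeasurableAtFilter g (nhds x) :=
    (hg.mono Ioo_subset_Icc_self).stronglyMeasurableAtFilter isOpen_Ioo x hx
  have hcont : ContinuousAt g x := (hg.mono Ioo_subset_Icc_self).continuousAt (isOpen_Ioo.mem_nhds hx)
  have h := (integral_hasDerivAt_right hint hmeas hcont).const_mul (n + 1 : ℂ)
  exact h
lemma derivPhi_odd (hab : a ≤ b) (hx₀ : x₀ ∈ Icc a b) (hf : ContinuousOn f (Icc a b))
    (hf0 : ∀ x ∈ Icc a b, f x ≠ 0) {k n : ℕ} (hk : k = n + 1) (hodd : k % 2 = 1)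
    {x : ℝ} (hx : x ∈ Ioo a b) :
    deriv (fun y => phiSys f x₀ k y / f y) x = (k : ℂ) * (Xr f x₀ n x * (f x ^ 2)⁻¹) := by
  subst hk
  have hEq : (fun y => phiSys f x₀ (n + 1) y / f y) =ᶠ[nhds x] Xr f x₀ (n + 1) := by
    filter_upwards [isOpen_Ioo.mem_nhds hx] with y hy
    simp only [phiSys, if_pos hodd]
    exact mul_div_cancel_left₀ _ (hf0 y (Ioo_subset_Icc_self hy))
  rw [hEq.deriv_eq, (hasDerivXr hab hx₀ hf hf0 n hx).deriv,
    show ((-1 : ℤ) ^ (n + 1)) = -1 from Odd.neg_one_pow (Nat.odd_iff.mpr hodd), zpow_neg_one]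
  push_cast; ring

lemma derivPhi_even (hab : a ≤ b) (hx₀ : x₀ ∈ Icc a b) (hf : ContinuousOn f (Icc a b))
    (hf0 : ∀ x ∈ Icc a b, f x ≠ 0) {k n : ℕ} (hk : k = n + 1) (heven : k % 2 = 0)
    {x : ℝ} (hx : x ∈ Ioo a b) :
    deriv (fun y => phiSys f x₀ k y / f y) x = (k : ℂ) * (Xt f x₀ n x * (f x ^ 2)⁻¹) := by
  subst hk
  have hEq : (fun y => phiSys f x₀ (n + 1) y / f y) =ᶠ[nhds x] Xt f x₀ (n + 1) := by
    filter_upwards [isOpen_Ioo.mem_nhds hx] with y hy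
    simp only [phiSys, if_neg (by omega : ¬ (n + 1) % 2 = 1)]
    exact mul_div_cancel_left₀ _ (hf0 y (Ioo_subset_Icc_self hy))
  rw [hEq.deriv_eq, (hasDerivXt hab hx₀ hf hf0 n hx).deriv,
    show ((-1 : ℤ) ^ n) = -1 from Odd.neg_one_pow (Nat.odd_iff.mpr (by omega)), zpow_neg_one]
  push_cast; ring

/-- Generalized derivatives of the `φ_k`: with `d₁^f g = f·(g/f)'` and
`d₂^f g = (1/f)·(f·d₁^f g)'` one has `d₁^f φ_k = k ψ_{k-1}` (`k ≥ 1`),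
`d₂^f φ_k = k(k-1) φ_{k-2}` (`k ≥ 2`) and `d₁^f φ₀ = d₂^f φ₀ = d₂^f φ₁ = 0`. -/
theorem stmt_8 (a b x₀ : ℝ) (hab : a < b) (hx₀ : x₀ ∈ Set.Icc a b)
    (f q : ℝ → ℂ)
    (hf : ContDiffOn ℝ 2 f (Set.Icc a b))
    (hq : ContinuousOn q (Set.Icc a b))
    (hfq : ∀ x ∈ Set.Icc a b, deriv (deriv f) x = q x * f x)
    (hf0 : ∀ x ∈ Set.Icc a b, f x ≠ 0) :
    (∀ k : ℕ, 1 ≤ k → ∀ x ∈ Set.Ioo a b,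
        f x * deriv (fun y => phiSys f x₀ k y / f y) x = (k : ℂ) * psiSys f x₀ (k - 1) x) ∧
    (∀ k : ℕ, 2 ≤ k → ∀ x ∈ Set.Ioo a b,
        (f x)⁻¹ * deriv (fun y => f y * (f y * deriv (fun z => phiSys f x₀ k z / f z) y)) x =
          ((k : ℂ) * ((k : ℂ) - 1)) * phiSys f x₀ (k - 2) x) ∧
    (∀ x ∈ Set.Ioo a b,
        f x * deriv (fun y => phiSys f x₀ 0 y / f y) x = 0 ∧
        (f x)⁻¹ * deriv (fun y => f y * (f y * deriv (fun z => phiSys f x₀ 0 z / f z) y)) x = 0 ∧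
        (f x)⁻¹ * deriv (fun y => f y * (f y * deriv (fun z => phiSys f x₀ 1 z / f z) y)) x = 0) := by
  have hab' := hab.le
  have hfc : ContinuousOn f (Set.Icc a b) := hf.continuousOn
  have hphi0 : ∀ y ∈ Set.Ioo a b, deriv (fun z => phiSys f x₀ 0 z / f z) y = 0 := by
    intro y hy
    have hEq : (fun z => phiSys f x₀ 0 z / f z) =ᶠ[nhds y] fun _ => (1 : ℂ) := by
      filter_upwards [isOpen_Ioo.mem_nhds hy] with z hz
      simp only [phiSys, Xt, if_neg (by omega : ¬ 0 % 2 = 1), mul_one]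
      exact div_self (hf0 z (Ioo_subset_Icc_self hz))
    rw [hEq.deriv_eq, deriv_const]
  refine ⟨?_, ?_, ?_⟩
  · intro k hk x hx
    have hfx := hf0 x (Ioo_subset_Icc_self hx)
    obtain ⟨n, rfl⟩ : ∃ n, k = n + 1 := ⟨k - 1, by omega⟩
    rcases Nat.even_or_odd (n + 1) with he | ho
    · rw [derivPhi_even hab' hx₀ hfc hf0 rfl (Nat.even_iff.mp he) hx]
      simp only [psiSys, Nat.add_sub_cancel, if_pos (show n % 2 = 1 by have := Nat.even_iff.mp he; omega)]
      field_simp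
    · rw [derivPhi_odd hab' hx₀ hfc hf0 rfl (Nat.odd_iff.mp ho) hx]
      simp only [psiSys, Nat.add_sub_cancel, if_neg (show ¬ n % 2 = 1 by have := Nat.odd_iff.mp ho; omega)]
      field_simp
  · intro k hk x hx
    have hfx := hf0 x (Ioo_subset_Icc_self hx)
    obtain ⟨m, rfl⟩ : ∃ m, k = m + 2 := ⟨k - 2, by omega⟩
    rcases Nat.even_or_odd (m + 2) with he | ho
    · have heven : (m + 2) % 2 = 0 := Nat.even_iff.mp he
      have hEq : (fun y => f y * (f y * deriv (fun z => phiSys f x₀ (m + 2) z / f z) y))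
          =ᶠ[nhds x] fun y => ((m : ℂ) + 2) * Xt f x₀ (m + 1) y := by
        filter_upwards [isOpen_Ioo.mem_nhds hx] with y hy
        rw [derivPhi_even hab' hx₀ hfc hf0 rfl heven hy]
        have hfy := hf0 y (Ioo_subset_Icc_self hy)
        push_cast
        field_simp
        ring
      rw [hEq.deriv_eq, ((hasDerivXt hab' hx₀ hfc hf0 m hx).const_mul ((m : ℂ) + 2)).deriv,
        show ((-1 : ℤ) ^ m) = 1 from Even.neg_one_pow (Nat.even_iff.mpr (by omega)), zpow_one]
      simp only [phiSys, Nat.add_sub_cancel, if_neg (by omega : ¬ m % 2 = 1)]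
      push_cast
      field_simp
      ring
    · have hodd : (m + 2) % 2 = 1 := Nat.odd_iff.mp ho
      have hEq : (fun y => f y * (f y * deriv (fun z => phiSys f x₀ (m + 2) z / f z) y))
          =ᶠ[nhds x] fun y => ((m : ℂ) + 2) * Xr f x₀ (m + 1) y := by
        filter_upwards [isOpen_Ioo.mem_nhds hx] with y hy
        rw [derivPhi_odd hab' hx₀ hfc hf0 rfl hodd hy]
        have hfy := hf0 y (Ioo_subset_Icc_self hy)
        push_cast
        field_simp
        ring
      rw [hEq.deriv_eq, ((hasDerivXr hab' hx₀ hfc hf0 m hx).const_mul ((m : ℂ) + 2)).deriv,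
        show ((-1 : ℤ) ^ (m + 1)) = 1 from Even.neg_one_pow (Nat.even_iff.mpr (by omega)), zpow_one]
      simp only [phiSys, Nat.add_sub_cancel, if_pos (by omega : m % 2 = 1)]
      push_cast
      field_simp
      ring
  · intro x hx
    have hfx := hf0 x (Ioo_subset_Icc_self hx)
    refine ⟨by rw [hphi0 x hx, mul_zero], ?_, ?_⟩
    · have hEq : (fun y => f y * (f y * deriv (fun z => phiSys f x₀ 0 z / f z) y))
          =ᶠ[nhds x] fun _ => (0 : ℂ) := by
        filter_upwards [isOpen_Ioo.mem_nhds hx] with y hy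
        rw [hphi0 y hy, mul_zero, mul_zero]
      rw [hEq.deriv_eq, deriv_const, mul_zero]
    · have hEq : (fun y => f y * (f y * deriv (fun z => phiSys f x₀ 1 z / f z) y))
          =ᶠ[nhds x] fun _ => (1 : ℂ) := by
        filter_upwards [isOpen_Ioo.mem_nhds hx] with y hy
        rw [derivPhi_odd hab' hx₀ hfc hf0 rfl (by norm_num) hy]
        have hfy := hf0 y (Ioo_subset_Icc_self hy)
        simp only [Xr]
        push_cast
        field_simp
      rw [hEq.deriv_eq, deriv_const, mul_zero]
end

section
/- Let u₁ = ∑_{k≥0} λ^k φ_{2k}/(2k)! and u₂ = ∑_{k≥0} λ^k φ_{2k+1}/(2k+1)!, where φ_k are the recursive integrals built from a nonvanishing C² solution f of f'' = q f on [a,b] with base point x₀. Then both series converge uniformly on [a,b], u₁ and u₂ satisfy u'' - q u = λ u, and u₁(x₀) = f(x₀), u₁'(x₀) = f'(x₀), u₂(x₀) = 0, u₂'(x₀) = 1/f(x₀). -/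
open Filter

/-!
Write `Z` for either family of recursive integrals: its weights alternate between two functions
`p` and `r` (`f²` and `f⁻²` for `X̃`, the other way round for `X`). Induction gives
`‖Zₙ(x)‖ ≤ (M |x - x₀|)ⁿ`, so `E = ∑ λᵏ Z₂ₖ / (2k)!` and `O = ∑ λᵏ Z₂ₖ₊₁ / (2k+1)!` are dominated
by exponential series and converge uniformly. Integrating term by term gives the first-order
system `O' = p E`, `E' = λ r O` with `E(x₀) = 1`, `O(x₀) = 0`. If `y' = f⁻² v` and `v' = λ f² y`,
then `u = f y` has `u' = f' y + v / f` and `u'' = f'' y + λ f y = (q + λ) u`; this applies to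
`y = E, v = λ O` for `X̃` and to `y = O, v = E` for `X`. Off `[a, b]` the solutions are continued
by `f`, resp. by their tangent line at `x₀`, so that `deriv` at an endpoint `x₀` is the one-sided
derivative.
-/

open Set MeasureTheory intervalIntegral Topology
open scoped Interval

section IntegralOnIcc

variable {a b x₀ x : ℝ} {w : ℝ → ℂ}

theorem hasDerivWithinAt_integral_Icc (hw : ContinuousOn w (Icc a b)) (hx₀ : x₀ ∈ Icc a b)
    (hx : x ∈ Icc a b) :
    HasDerivWithinAt (fun y => ∫ s in x₀..y, w s) (w x) (Icc a b) x := by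
  have : Fact (x ∈ Icc a b) := ⟨hx⟩
  exact integral_hasDerivWithinAt_right ((hw.mono (uIcc_subset_Icc hx₀ hx)).intervalIntegrable)
    (hw.stronglyMeasurableAtFilter_nhdsWithin measurableSet_Icc x) (hw x hx)

theorem continuousOn_integral_Icc (hw : ContinuousOn w (Icc a b)) (hx₀ : x₀ ∈ Icc a b) :
    ContinuousOn (fun y => ∫ s in x₀..y, w s) (Icc a b) := fun _ hy =>
  (hasDerivWithinAt_integral_Icc hw hx₀ hy).continuousWithinAt

theorem norm_integral_le_of_norm_le_mul_pow {C : ℝ} {n : ℕ} (hw : ContinuousOn w (Icc a b))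
    (hx₀ : x₀ ∈ Icc a b) (hx : x ∈ Icc a b)
    (hwC : ∀ s ∈ Icc a b, ‖w s‖ ≤ C * |s - x₀| ^ n) :
    ‖∫ s in x₀..x, w s‖ ≤ C * (|x - x₀| ^ (n + 1) / (n + 1)) := by
  have hsub : Ι x₀ x ⊆ Icc a b := uIoc_subset_uIcc.trans (uIcc_subset_Icc hx₀ hx)
  calc ‖∫ s in x₀..x, w s‖ ≤ ∫ s in Ι x₀ x, ‖w s‖ := norm_integral_le_integral_norm_uIoc
    _ ≤ ∫ s in Ι x₀ x, C * |s - x₀| ^ n := by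
        refine setIntegral_mono_on ?_ ?_ measurableSet_uIoc fun s hs => hwC s (hsub hs)
        · rw [← intervalIntegrable_iff]
          exact (hw.mono (uIcc_subset_Icc hx₀ hx)).norm.intervalIntegrable
        · rw [← intervalIntegrable_iff]
          exact (Continuous.intervalIntegrable (by fun_prop) _ _)
    _ = C * (|x - x₀| ^ (n + 1) / (n + 1)) := by
        rw [MeasureTheory.integral_const_mul, integral_pow_abs_sub_uIoc]

theorem integral_tsum_of_norm_le {h : ℕ → ℝ → ℂ} {u : ℕ → ℝ}
    (hx₀ : x₀ ∈ Icc a b) (hx : x ∈ Icc a b) (hc : ∀ k, ContinuousOn (h k) (Icc a b))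
    (hu : Summable u) (hhu : ∀ k, ∀ s ∈ Icc a b, ‖h k s‖ ≤ u k) :
    ∫ s in x₀..x, ∑' k, h k s = ∑' k, ∫ s in x₀..x, h k s := by
  have hsub : Ι x₀ x ⊆ Icc a b := uIoc_subset_uIcc.trans (uIcc_subset_Icc hx₀ hx)
  refine (hasSum_integral_of_dominated_convergence (fun k _ => u k)
    (fun k => ((hc k).mono hsub).aestronglyMeasurable measurableSet_uIoc)
    (fun k => ae_of_all _ fun s hs => hhu k s (hsub hs)) (ae_of_all _ fun _ _ => hu)
    intervalIntegrable_const
    (ae_of_all _ fun s hs => (hu.of_norm_bounded fun k => hhu k s (hsub hs)).hasSum)).tsum_eq.symm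

end IntegralOnIcc

noncomputable def recInt (x₀ : ℝ) (g : ℕ → ℝ → ℂ) : ℕ → ℝ → ℂ
  | 0 => fun _ => 1
  | n + 1 => fun x => (n + 1 : ℂ) * ∫ s in x₀..x, recInt x₀ g n s * g n s

section RecInt

variable {a b x₀ : ℝ} {g : ℕ → ℝ → ℂ}

@[simp] theorem recInt_zero (x : ℝ) : recInt x₀ g 0 x = 1 := rfl

theorem recInt_succ (n : ℕ) (x : ℝ) :
    recInt x₀ g (n + 1) x = (n + 1 : ℂ) * ∫ s in x₀..x, recInt x₀ g n s * g n s := rfl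

theorem integral_div_factorial_mul_recInt (c : ℂ) (n : ℕ) (x : ℝ) :
    ∫ s in x₀..x, c / n.factorial * (recInt x₀ g n s * g n s) =
      c / (n + 1).factorial * recInt x₀ g (n + 1) x := by
  rw [intervalIntegral.integral_const_mul, recInt_succ, Nat.factorial_succ]
  push_cast
  field_simp

theorem continuousOn_recInt (hx₀ : x₀ ∈ Icc a b) (hg : ∀ n, ContinuousOn (g n) (Icc a b))
    (n : ℕ) : ContinuousOn (recInt x₀ g n) (Icc a b) := by
  induction n with
  | zero => exact continuousOn_const
  | succ n ih =>
    exact continuousOn_const.mul (continuousOn_integral_Icc (ih.mul (hg n)) hx₀)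

theorem norm_recInt_le {M : ℝ} (hx₀ : x₀ ∈ Icc a b) (hg : ∀ n, ContinuousOn (g n) (Icc a b))
    (hM : ∀ n, ∀ s ∈ Icc a b, ‖g n s‖ ≤ M) (n : ℕ) :
    ∀ x ∈ Icc a b, ‖recInt x₀ g n x‖ ≤ (M * |x - x₀|) ^ n := by
  have hM0 : 0 ≤ M := (norm_nonneg _).trans (hM 0 x₀ hx₀)
  induction n with
  | zero => simp
  | succ n ih =>
    intro x hx
    have hbound : ∀ s ∈ Icc a b, ‖recInt x₀ g n s * g n s‖ ≤ M ^ (n + 1) * |s - x₀| ^ n := by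
      intro s hs
      rw [pow_succ', mul_assoc, ← mul_pow, norm_mul, mul_comm]
      exact mul_le_mul (hM n s hs) (ih s hs) (norm_nonneg _) hM0
    have hint := norm_integral_le_of_norm_le_mul_pow
      ((continuousOn_recInt hx₀ hg n).mul (hg n)) hx₀ hx hbound
    have hn : ‖(n + 1 : ℂ)‖ = n + 1 := by exact_mod_cast Complex.norm_natCast (n + 1)
    rw [recInt_succ, norm_mul, hn, mul_pow]
    calc ((n : ℝ) + 1) * ‖∫ s in x₀..x, recInt x₀ g n s * g n s‖
        ≤ (n + 1) * (M ^ (n + 1) * (|x - x₀| ^ (n + 1) / (n + 1))) := by gcongr; exact hint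
      _ = M ^ (n + 1) * |x - x₀| ^ (n + 1) := by field_simp

end RecInt

theorem norm_pow_div_factorial_mul_le {c z : ℂ} {A C : ℝ} (k j : ℕ)
    (hz : ‖z‖ ≤ C * A ^ (2 * k + j)) :
    ‖c ^ k / ((2 * k + j).factorial : ℂ) * z‖ ≤ C * A ^ j * ((‖c‖ * A ^ 2) ^ k / k.factorial) := by
  have hfac : (k.factorial : ℝ) ≤ (2 * k + j).factorial := by
    exact_mod_cast Nat.factorial_le (by omega)
  have hCA : 0 ≤ C * A ^ (2 * k + j) := (norm_nonneg z).trans hz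
  rw [norm_mul, norm_div, norm_pow, Complex.norm_natCast]
  calc ‖c‖ ^ k / (2 * k + j).factorial * ‖z‖
      ≤ ‖c‖ ^ k / k.factorial * (C * A ^ (2 * k + j)) := by gcongr
    _ = C * A ^ j * ((‖c‖ * A ^ 2) ^ k / k.factorial) := by ring

noncomputable def evenSeries (c : ℂ) (Z : ℕ → ℝ → ℂ) (x : ℝ) : ℂ :=
  ∑' k, c ^ k / ((2 * k).factorial : ℂ) * Z (2 * k) x

noncomputable def oddSeries (c : ℂ) (Z : ℕ → ℝ → ℂ) (x : ℝ) : ℂ :=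
  ∑' k, c ^ k / ((2 * k + 1).factorial : ℂ) * Z (2 * k + 1) x

section Series

variable {c : ℂ} {Z : ℕ → ℝ → ℂ} {A : ℝ} {s : Set ℝ}

theorem tendstoUniformlyOn_range_succ {F : ℕ → ℝ → ℂ} {u : ℕ → ℝ} (hu : Summable u)
    (hF : ∀ k, ∀ x ∈ s, ‖F k x‖ ≤ u k) :
    TendstoUniformlyOn (fun N x => ∑ k ∈ Finset.range (N + 1), F k x) (fun x => ∑' k, F k x)
      atTop s := fun v hv =>
  (tendsto_add_atTop_nat 1).eventually (tendstoUniformlyOn_tsum_nat hu hF v hv)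

theorem summable_majorant (c : ℂ) (A C : ℝ) (j : ℕ) :
    Summable fun k => C * A ^ j * ((‖c‖ * A ^ 2) ^ k / k.factorial) :=
  (Real.summable_pow_div_factorial _).mul_left _

theorem continuousOn_evenSeries (hZc : ∀ n, ContinuousOn (Z n) s)
    (hZ : ∀ n, ∀ x ∈ s, ‖Z n x‖ ≤ A ^ n) : ContinuousOn (evenSeries c Z) s :=
  continuousOn_tsum (fun _ => continuousOn_const.mul (hZc _)) (summable_majorant c A 1 0)
    fun k x hx => norm_pow_div_factorial_mul_le k 0 ((hZ _ x hx).trans_eq (one_mul _).symm)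

theorem continuousOn_oddSeries (hZc : ∀ n, ContinuousOn (Z n) s)
    (hZ : ∀ n, ∀ x ∈ s, ‖Z n x‖ ≤ A ^ n) : ContinuousOn (oddSeries c Z) s :=
  continuousOn_tsum (fun _ => continuousOn_const.mul (hZc _)) (summable_majorant c A 1 1)
    fun k x hx => norm_pow_div_factorial_mul_le k 1 ((hZ _ x hx).trans_eq (one_mul _).symm)

theorem tendstoUniformlyOn_mul_evenSeries {φ : ℝ → ℂ} {B : ℝ}
    (hZ : ∀ n, ∀ x ∈ s, ‖Z n x‖ ≤ A ^ n) (hφ : ∀ x ∈ s, ‖φ x‖ ≤ B) :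
    TendstoUniformlyOn
      (fun N x => ∑ k ∈ Finset.range (N + 1), c ^ k / ((2 * k).factorial : ℂ) * (φ x * Z (2 * k) x))
      (fun x => φ x * evenSeries c Z x) atTop s := by
  refine (tendstoUniformlyOn_range_succ (summable_majorant c A B 0) fun k x hx =>
    norm_pow_div_factorial_mul_le k 0 (norm_mul_le_of_le (hφ x hx) (hZ _ x hx))).congr_right
    fun x _ => ?_
  simp only [evenSeries, ← tsum_mul_left]
  exact tsum_congr fun _ => mul_left_comm _ _ _

theorem tendstoUniformlyOn_mul_oddSeries {φ : ℝ → ℂ} {B : ℝ}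
    (hZ : ∀ n, ∀ x ∈ s, ‖Z n x‖ ≤ A ^ n) (hφ : ∀ x ∈ s, ‖φ x‖ ≤ B) :
    TendstoUniformlyOn
      (fun N x => ∑ k ∈ Finset.range (N + 1),
        c ^ k / ((2 * k + 1).factorial : ℂ) * (φ x * Z (2 * k + 1) x))
      (fun x => φ x * oddSeries c Z x) atTop s := by
  refine (tendstoUniformlyOn_range_succ (summable_majorant c A B 1) fun k x hx =>
    norm_pow_div_factorial_mul_le k 1 (norm_mul_le_of_le (hφ x hx) (hZ _ x hx))).congr_right
    fun x _ => ?_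
  simp only [oddSeries, ← tsum_mul_left]
  exact tsum_congr fun _ => mul_left_comm _ _ _

end Series

def altWeights (p r : ℝ → ℂ) (n : ℕ) : ℝ → ℂ := if Even n then p else r

section AltWeights

variable {a b x₀ x : ℝ} {p r : ℝ → ℂ} {c : ℂ}

@[simp] theorem altWeights_two_mul (k : ℕ) : altWeights p r (2 * k) = p := by
  simp [altWeights]

@[simp] theorem altWeights_two_mul_add_one (k : ℕ) : altWeights p r (2 * k + 1) = r := by
  simp [altWeights]

theorem continuousOn_altWeights {s : Set ℝ} (hp : ContinuousOn p s) (hr : ContinuousOn r s)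
    (n : ℕ) : ContinuousOn (altWeights p r n) s := by
  unfold altWeights
  split_ifs <;> assumption

theorem exists_norm_recInt_altWeights_le (hx₀ : x₀ ∈ Icc a b) (hp : ContinuousOn p (Icc a b))
    (hr : ContinuousOn r (Icc a b)) :
    ∃ M A : ℝ, (∀ n, ∀ s ∈ Icc a b, ‖altWeights p r n s‖ ≤ M) ∧
      ∀ n, ∀ x ∈ Icc a b, ‖recInt x₀ (altWeights p r) n x‖ ≤ A ^ n := by
  obtain ⟨Mp, hMp⟩ := isCompact_Icc.exists_bound_of_continuousOn hp
  obtain ⟨Mr, hMr⟩ := isCompact_Icc.exists_bound_of_continuousOn hr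
  have hM : ∀ n, ∀ s ∈ Icc a b, ‖altWeights p r n s‖ ≤ max Mp Mr := by
    intro n s hs
    unfold altWeights
    split_ifs
    exacts [(hMp s hs).trans (le_max_left _ _), (hMr s hs).trans (le_max_right _ _)]
  have hM0 : 0 ≤ max Mp Mr := (norm_nonneg _).trans (hM 0 x₀ hx₀)
  refine ⟨max Mp Mr, max Mp Mr * (b - a), hM, fun n x hx => ?_⟩
  refine (norm_recInt_le hx₀ (continuousOn_altWeights hp hr) hM n x hx).trans ?_
  have hdist : |x - x₀| ≤ b - a := Real.dist_le_of_mem_Icc hx hx₀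
  gcongr

theorem oddSeries_recInt_altWeights_eq (hx₀ : x₀ ∈ Icc a b) (hp : ContinuousOn p (Icc a b))
    (hr : ContinuousOn r (Icc a b)) (hx : x ∈ Icc a b) :
    oddSeries c (recInt x₀ (altWeights p r)) x =
      ∫ s in x₀..x, p s * evenSeries c (recInt x₀ (altWeights p r)) s := by
  obtain ⟨M, A, hM, hZ⟩ := exists_norm_recInt_altWeights_le hx₀ hp hr
  have hZc := continuousOn_recInt hx₀ (continuousOn_altWeights hp hr)
  calc oddSeries c (recInt x₀ (altWeights p r)) x
      = ∑' k, ∫ s in x₀..x, c ^ k / ((2 * k).factorial : ℂ) *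
          (recInt x₀ (altWeights p r) (2 * k) s * altWeights p r (2 * k) s) :=
        tsum_congr fun _ => (integral_div_factorial_mul_recInt _ _ _).symm
    _ = ∫ s in x₀..x, ∑' k, c ^ k / ((2 * k).factorial : ℂ) *
          (recInt x₀ (altWeights p r) (2 * k) s * altWeights p r (2 * k) s) := by
        refine (integral_tsum_of_norm_le hx₀ hx
          (fun k => continuousOn_const.mul ((hZc _).mul (continuousOn_altWeights hp hr _)))
          (summable_majorant c A M 0) fun k s hs => norm_pow_div_factorial_mul_le k 0
            ((norm_mul_le_of_le (hZ _ s hs) (hM _ s hs)).trans_eq (mul_comm _ _))).symm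
    _ = ∫ s in x₀..x, p s * evenSeries c (recInt x₀ (altWeights p r)) s := by
        simp only [evenSeries, altWeights_two_mul, ← tsum_mul_left]
        exact integral_congr fun s _ => tsum_congr fun k => by ring

theorem evenSeries_recInt_altWeights_eq (hx₀ : x₀ ∈ Icc a b) (hp : ContinuousOn p (Icc a b))
    (hr : ContinuousOn r (Icc a b)) (hx : x ∈ Icc a b) :
    evenSeries c (recInt x₀ (altWeights p r)) x =
      1 + c * ∫ s in x₀..x, r s * oddSeries c (recInt x₀ (altWeights p r)) s := by
  obtain ⟨M, A, hM, hZ⟩ := exists_norm_recInt_altWeights_le hx₀ hp hr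
  have hZc := continuousOn_recInt hx₀ (continuousOn_altWeights hp hr)
  have hsum : Summable fun k =>
      c ^ k / ((2 * k).factorial : ℂ) * recInt x₀ (altWeights p r) (2 * k) x :=
    (summable_majorant c A 1 0).of_norm_bounded fun k =>
      norm_pow_div_factorial_mul_le k 0 ((hZ _ x hx).trans_eq (one_mul _).symm)
  have hint : ∫ s in x₀..x, r s * oddSeries c (recInt x₀ (altWeights p r)) s =
      ∑' k, c ^ k / ((2 * k + 1 + 1).factorial : ℂ) *
        recInt x₀ (altWeights p r) (2 * k + 1 + 1) x := by
    calc ∫ s in x₀..x, r s * oddSeries c (recInt x₀ (altWeights p r)) s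
        = ∫ s in x₀..x, ∑' k, c ^ k / ((2 * k + 1).factorial : ℂ) *
          (recInt x₀ (altWeights p r) (2 * k + 1) s * altWeights p r (2 * k + 1) s) := by
          simp only [oddSeries, altWeights_two_mul_add_one, ← tsum_mul_left]
          exact integral_congr fun s _ => tsum_congr fun k => by ring
      _ = _ := by
        refine (integral_tsum_of_norm_le hx₀ hx
          (fun k => continuousOn_const.mul ((hZc _).mul (continuousOn_altWeights hp hr _)))
          (summable_majorant c A M 1) fun k s hs => norm_pow_div_factorial_mul_le k 1
            ((norm_mul_le_of_le (hZ _ s hs) (hM _ s hs)).trans_eq (mul_comm _ _))).trans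
          (tsum_congr fun _ => integral_div_factorial_mul_recInt _ _ _)
  rw [evenSeries, hsum.tsum_eq_zero_add, hint, ← tsum_mul_left]
  congr 1
  · simp
  · refine tsum_congr fun k => ?_
    rw [show 2 * (k + 1) = 2 * k + 1 + 1 by ring, pow_succ]
    ring

theorem hasDerivWithinAt_oddSeries_recInt_altWeights (hx₀ : x₀ ∈ Icc a b)
    (hp : ContinuousOn p (Icc a b)) (hr : ContinuousOn r (Icc a b)) (hx : x ∈ Icc a b) :
    HasDerivWithinAt (oddSeries c (recInt x₀ (altWeights p r)))
      (p x * evenSeries c (recInt x₀ (altWeights p r)) x) (Icc a b) x := by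
  obtain ⟨_, A, -, hZ⟩ := exists_norm_recInt_altWeights_le hx₀ hp hr
  have hE := continuousOn_evenSeries (c := c)
    (continuousOn_recInt hx₀ (continuousOn_altWeights hp hr)) hZ
  exact (hasDerivWithinAt_integral_Icc (hp.mul hE) hx₀ hx).congr
    (fun y hy => oddSeries_recInt_altWeights_eq hx₀ hp hr hy)
    (oddSeries_recInt_altWeights_eq hx₀ hp hr hx)

theorem hasDerivWithinAt_evenSeries_recInt_altWeights (hx₀ : x₀ ∈ Icc a b)
    (hp : ContinuousOn p (Icc a b)) (hr : ContinuousOn r (Icc a b)) (hx : x ∈ Icc a b) :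
    HasDerivWithinAt (evenSeries c (recInt x₀ (altWeights p r)))
      (c * (r x * oddSeries c (recInt x₀ (altWeights p r)) x)) (Icc a b) x := by
  obtain ⟨_, A, -, hZ⟩ := exists_norm_recInt_altWeights_le hx₀ hp hr
  have hO := continuousOn_oddSeries (c := c)
    (continuousOn_recInt hx₀ (continuousOn_altWeights hp hr)) hZ
  exact (((hasDerivWithinAt_integral_Icc (hr.mul hO) hx₀ hx).const_mul c).const_add 1).congr
    (fun y hy => evenSeries_recInt_altWeights_eq hx₀ hp hr hy)
    (evenSeries_recInt_altWeights_eq hx₀ hp hr hx)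

theorem evenSeries_recInt_altWeights_self (hx₀ : x₀ ∈ Icc a b) (hp : ContinuousOn p (Icc a b))
    (hr : ContinuousOn r (Icc a b)) : evenSeries c (recInt x₀ (altWeights p r)) x₀ = 1 := by
  simp [evenSeries_recInt_altWeights_eq hx₀ hp hr hx₀]

theorem oddSeries_recInt_altWeights_self (hx₀ : x₀ ∈ Icc a b) (hp : ContinuousOn p (Icc a b))
    (hr : ContinuousOn r (Icc a b)) : oddSeries c (recInt x₀ (altWeights p r)) x₀ = 0 := by
  simp [oddSeries_recInt_altWeights_eq hx₀ hp hr hx₀]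

end AltWeights

theorem deriv_deriv_sub_eq_of_factorization {s : Set ℝ} (hs : IsOpen s)
    {f f' q y v u : ℝ → ℂ} {lam : ℂ}
    (hf : ∀ x ∈ s, HasDerivAt f (f' x) x) (hf' : ∀ x ∈ s, HasDerivAt f' (q x * f x) x)
    (hf0 : ∀ x ∈ s, f x ≠ 0) (hy : ∀ x ∈ s, HasDerivAt y ((f x ^ 2)⁻¹ * v x) x)
    (hv : ∀ x ∈ s, HasDerivAt v (lam * (f x ^ 2 * y x)) x) (hu : EqOn u (fun x => f x * y x) s)
    {x : ℝ} (hx : x ∈ s) :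
    deriv (deriv u) x - q x * u x = lam * u x := by
  have hu' : ∀ z ∈ s, HasDerivAt u (f' z * y z + (f z)⁻¹ * v z) z := by
    intro z hz
    refine (((hf z hz).mul (hy z hz)).congr_of_eventuallyEq
      (eventuallyEq_of_mem (hs.mem_nhds hz) hu)).congr_deriv ?_
    field_simp [hf0 z hz]
  have hderiv : deriv u =ᶠ[𝓝 x] fun z => f' z * y z + (f z)⁻¹ * v z :=
    eventuallyEq_of_mem (hs.mem_nhds hx) fun z hz => (hu' z hz).deriv
  have h2 := ((hf' x hx).mul (hy x hx)).add (((hf x hx).fun_inv (hf0 x hx)).mul (hv x hx))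
  rw [(h2.congr_of_eventuallyEq hderiv).deriv, hu hx]
  field_simp [hf0 x hx]
  ring

theorem deriv_piecewise_eq_of_hasDerivWithinAt_sub {s : Set ℝ} [∀ y, Decidable (y ∈ s)]
    {F G : ℝ → ℂ} {x : ℝ} (hGF : G x = F x) (h : HasDerivWithinAt (G - F) 0 s x) :
    deriv (s.piecewise G F) x = deriv F x := by
  have hx : s.indicator (G - F) x = 0 := by
    by_cases hxs : x ∈ s <;> simp [hxs, hGF]
  have hT : HasDerivAt (s.indicator (G - F)) 0 x := by
    have hin : HasDerivWithinAt (s.indicator (G - F)) 0 s x :=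
      h.congr (fun y hy => indicator_of_mem hy _) (hx.trans (sub_eq_zero.2 hGF).symm)
    have hout : HasDerivWithinAt (s.indicator (G - F)) 0 sᶜ x :=
      (hasDerivWithinAt_const x sᶜ 0).congr (fun y hy => indicator_of_notMem hy _) hx
    simpa using hin.union hout
  have hsplit : s.piecewise G F = F + s.indicator (G - F) := by
    funext y
    by_cases hy : y ∈ s <;> simp [hy]
  rw [hsplit]
  by_cases hF : DifferentiableAt ℝ F x
  · exact (hF.hasDerivAt.add hT).deriv.trans (add_zero _)
  · rw [deriv_zero_of_not_differentiableAt hF,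
      deriv_zero_of_not_differentiableAt (by rwa [hT.differentiableAt.add_iff_left])]

theorem Xt_eq_recInt (f : ℝ → ℂ) (x₀ : ℝ) :
    Xt f x₀ = recInt x₀ (altWeights (fun s => f s ^ 2) fun s => (f s ^ 2)⁻¹) := by
  funext n
  induction n with
  | zero => rfl
  | succ n ih =>
    funext x
    simp only [Xt, recInt, ih]
    rcases Nat.even_or_odd n with hn | hn
    · simp [altWeights, hn, hn.neg_one_pow]
    · simp [altWeights, hn.neg_one_pow, Nat.not_even_iff_odd.2 hn]

theorem Xr_eq_recInt (f : ℝ → ℂ) (x₀ : ℝ) :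
    Xr f x₀ = recInt x₀ (altWeights (fun s => (f s ^ 2)⁻¹) fun s => f s ^ 2) := by
  funext n
  induction n with
  | zero => rfl
  | succ n ih =>
    funext x
    simp only [Xr, recInt, ih]
    rcases Nat.even_or_odd n with hn | hn
    · simp [altWeights, hn, hn.add_one.neg_one_pow]
    · simp [altWeights, hn.add_one.neg_one_pow, Nat.not_even_iff_odd.2 hn]

theorem phiSys_two_mul (f : ℝ → ℂ) (x₀ : ℝ) (k : ℕ) (x : ℝ) :
    phiSys f x₀ (2 * k) x = f x * Xt f x₀ (2 * k) x := by
  simp [phiSys]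

theorem phiSys_two_mul_add_one (f : ℝ → ℂ) (x₀ : ℝ) (k : ℕ) (x : ℝ) :
    phiSys f x₀ (2 * k + 1) x = f x * Xr f x₀ (2 * k + 1) x := by
  simp [phiSys]

theorem hasDerivAt_deriv_of_contDiffOn_Icc {a b x : ℝ} {f : ℝ → ℂ}
    (hf : ContDiffOn ℝ 2 f (Icc a b)) (hx : x ∈ Ioo a b) :
    HasDerivAt f (deriv f x) x ∧ HasDerivAt (deriv f) (deriv (deriv f) x) x := by
  have hf' : ContDiffOn ℝ 1 (deriv f) (Ioo a b) :=
    (hf.mono Ioo_subset_Icc_self).deriv_of_isOpen isOpen_Ioo (by norm_num)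
  exact ⟨((hf.contDiffAt (Icc_mem_nhds hx.1 hx.2)).differentiableAt (by norm_num)).hasDerivAt,
    ((hf'.differentiableOn one_ne_zero x hx).differentiableAt (isOpen_Ioo.mem_nhds hx)).hasDerivAt⟩

section Solutions

variable {a b x₀ : ℝ} {q f : ℝ → ℂ} {lam : ℂ}

theorem exists_solution_evenSeries (hx₀ : x₀ ∈ Icc a b) (hf : ContDiffOn ℝ 2 f (Icc a b))
    (hf0 : ∀ x ∈ Icc a b, f x ≠ 0) (hfq : ∀ x ∈ Icc a b, deriv (deriv f) x = q x * f x) :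
    ∃ u : ℝ → ℂ,
      TendstoUniformlyOn
        (fun N x => ∑ k ∈ Finset.range (N + 1),
          lam ^ k / ((2 * k).factorial : ℂ) * phiSys f x₀ (2 * k) x) u atTop (Icc a b) ∧
      (∀ x ∈ Ioo a b, deriv (deriv u) x - q x * u x = lam * u x) ∧
      u x₀ = f x₀ ∧ deriv u x₀ = deriv f x₀ := by
  classical
  have hsq : ContinuousOn (fun s => f s ^ 2) (Icc a b) := hf.continuousOn.pow 2
  have hsqinv : ContinuousOn (fun s => (f s ^ 2)⁻¹) (Icc a b) :=
    hsq.inv₀ fun x hx => pow_ne_zero 2 (hf0 x hx)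
  obtain ⟨B, hB⟩ := isCompact_Icc.exists_bound_of_continuousOn hf.continuousOn
  obtain ⟨-, A, -, hZ⟩ := exists_norm_recInt_altWeights_le hx₀ hsq hsqinv
  have hE := fun x (hx : x ∈ Icc a b) =>
    hasDerivWithinAt_evenSeries_recInt_altWeights (c := lam) hx₀ hsq hsqinv hx
  have hO := fun x (hx : x ∈ Icc a b) =>
    hasDerivWithinAt_oddSeries_recInt_altWeights (c := lam) hx₀ hsq hsqinv hx
  have hEx₀ := evenSeries_recInt_altWeights_self (c := lam) hx₀ hsq hsqinv
  have hOx₀ := oddSeries_recInt_altWeights_self (c := lam) hx₀ hsq hsqinv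
  rw [← Xt_eq_recInt] at hZ hE hO hEx₀ hOx₀
  refine ⟨(Icc a b).piecewise (fun x => f x * evenSeries lam (Xt f x₀) x) f,
    ?_, fun x hx => ?_, ?_, ?_⟩
  · simp only [phiSys_two_mul]
    exact (tendstoUniformlyOn_mul_evenSeries hZ hB).congr_right
      fun x hx => by rw [piecewise_eq_of_mem _ _ _ hx]
  · have hnhds := fun x (hx : x ∈ Ioo a b) => Icc_mem_nhds hx.1 hx.2
    refine deriv_deriv_sub_eq_of_factorization isOpen_Ioo
      (v := fun x => lam * oddSeries lam (Xt f x₀) x)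
      (fun x hx => (hasDerivAt_deriv_of_contDiffOn_Icc hf hx).1)
      (fun x hx => hfq x (Ioo_subset_Icc_self hx) ▸ (hasDerivAt_deriv_of_contDiffOn_Icc hf hx).2)
      (fun x hx => hf0 x (Ioo_subset_Icc_self hx))
      (fun x hx => ((hE x (Ioo_subset_Icc_self hx)).hasDerivAt (hnhds x hx)).congr_deriv
        (mul_left_comm _ _ _))
      (fun x hx => ((hO x (Ioo_subset_Icc_self hx)).hasDerivAt (hnhds x hx)).const_mul lam)
      (fun x hx => piecewise_eq_of_mem _ _ _ (Ioo_subset_Icc_self hx)) hx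
  · simp [hx₀, hEx₀]
  · have hfw := ((hf.differentiableOn (by norm_num)) x₀ hx₀).hasDerivWithinAt
    refine deriv_piecewise_eq_of_hasDerivWithinAt_sub (by simp [hEx₀])
      (((hfw.mul (hE x₀ hx₀)).sub hfw).congr_deriv ?_)
    simp [hEx₀, hOx₀]

theorem exists_solution_oddSeries (hx₀ : x₀ ∈ Icc a b) (hf : ContDiffOn ℝ 2 f (Icc a b))
    (hf0 : ∀ x ∈ Icc a b, f x ≠ 0) (hfq : ∀ x ∈ Icc a b, deriv (deriv f) x = q x * f x) :
    ∃ u : ℝ → ℂ,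
      TendstoUniformlyOn
        (fun N x => ∑ k ∈ Finset.range (N + 1),
          lam ^ k / ((2 * k + 1).factorial : ℂ) * phiSys f x₀ (2 * k + 1) x) u atTop (Icc a b) ∧
      (∀ x ∈ Ioo a b, deriv (deriv u) x - q x * u x = lam * u x) ∧
      u x₀ = 0 ∧ deriv u x₀ = 1 / f x₀ := by
  classical
  have hsq : ContinuousOn (fun s => f s ^ 2) (Icc a b) := hf.continuousOn.pow 2
  have hsqinv : ContinuousOn (fun s => (f s ^ 2)⁻¹) (Icc a b) :=
    hsq.inv₀ fun x hx => pow_ne_zero 2 (hf0 x hx)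
  obtain ⟨B, hB⟩ := isCompact_Icc.exists_bound_of_continuousOn hf.continuousOn
  obtain ⟨-, A, -, hZ⟩ := exists_norm_recInt_altWeights_le hx₀ hsqinv hsq
  have hE := fun x (hx : x ∈ Icc a b) =>
    hasDerivWithinAt_evenSeries_recInt_altWeights (c := lam) hx₀ hsqinv hsq hx
  have hO := fun x (hx : x ∈ Icc a b) =>
    hasDerivWithinAt_oddSeries_recInt_altWeights (c := lam) hx₀ hsqinv hsq hx
  have hEx₀ := evenSeries_recInt_altWeights_self (c := lam) hx₀ hsqinv hsq
  have hOx₀ := oddSeries_recInt_altWeights_self (c := lam) hx₀ hsqinv hsq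
  rw [← Xr_eq_recInt] at hZ hE hO hEx₀ hOx₀
  have hline : HasDerivAt (fun x : ℝ => ((x : ℂ) - x₀) / f x₀) (1 / f x₀) x₀ := by
    simpa using ((hasDerivAt_id x₀).ofReal_comp.sub_const (x₀ : ℂ)).div_const (f x₀)
  refine ⟨(Icc a b).piecewise (fun x => f x * oddSeries lam (Xr f x₀) x)
    (fun x => ((x : ℂ) - x₀) / f x₀), ?_, fun x hx => ?_, ?_, ?_⟩
  · simp only [phiSys_two_mul_add_one]
    exact (tendstoUniformlyOn_mul_oddSeries hZ hB).congr_right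
      fun x hx => by rw [piecewise_eq_of_mem _ _ _ hx]
  · have hnhds := fun x (hx : x ∈ Ioo a b) => Icc_mem_nhds hx.1 hx.2
    exact deriv_deriv_sub_eq_of_factorization isOpen_Ioo
      (fun x hx => (hasDerivAt_deriv_of_contDiffOn_Icc hf hx).1)
      (fun x hx => hfq x (Ioo_subset_Icc_self hx) ▸ (hasDerivAt_deriv_of_contDiffOn_Icc hf hx).2)
      (fun x hx => hf0 x (Ioo_subset_Icc_self hx))
      (fun x hx => (hO x (Ioo_subset_Icc_self hx)).hasDerivAt (hnhds x hx))
      (fun x hx => (hE x (Ioo_subset_Icc_self hx)).hasDerivAt (hnhds x hx))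
      (fun x hx => piecewise_eq_of_mem _ _ _ (Ioo_subset_Icc_self hx)) hx
  · simp [hx₀, hOx₀]
  · have hfw := ((hf.differentiableOn (by norm_num)) x₀ hx₀).hasDerivWithinAt
    refine (deriv_piecewise_eq_of_hasDerivWithinAt_sub (by simp [hOx₀])
      (((hfw.mul (hO x₀ hx₀)).sub hline.hasDerivWithinAt).congr_deriv ?_)).trans hline.deriv
    rw [hEx₀, hOx₀]
    field_simp [hf0 x₀ hx₀]
    ring

end Solutions

theorem stmt_10_general (a b x₀ : ℝ) (hx₀ : x₀ ∈ Set.Icc a b)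
    (q f : ℝ → ℂ) (lam : ℂ)
    (hf : ContDiffOn ℝ 2 f (Set.Icc a b))
    (hf0 : ∀ x ∈ Set.Icc a b, f x ≠ 0)
    (hfq : ∀ x ∈ Set.Icc a b, deriv (deriv f) x = q x * f x) :
    ∃ u₁ u₂ : ℝ → ℂ,
      TendstoUniformlyOn
        (fun N x => ∑ k ∈ Finset.range (N + 1),
          lam ^ k / ((2 * k).factorial : ℂ) * phiSys f x₀ (2 * k) x)
        u₁ atTop (Set.Icc a b) ∧
      TendstoUniformlyOn
        (fun N x => ∑ k ∈ Finset.range (N + 1),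
          lam ^ k / ((2 * k + 1).factorial : ℂ) * phiSys f x₀ (2 * k + 1) x)
        u₂ atTop (Set.Icc a b) ∧
      (∀ x ∈ Set.Ioo a b, deriv (deriv u₁) x - q x * u₁ x = lam * u₁ x) ∧
      (∀ x ∈ Set.Ioo a b, deriv (deriv u₂) x - q x * u₂ x = lam * u₂ x) ∧
      u₁ x₀ = f x₀ ∧ deriv u₁ x₀ = deriv f x₀ ∧
      u₂ x₀ = 0 ∧ deriv u₂ x₀ = 1 / f x₀ := by
  obtain ⟨u₁, hconv₁, hode₁, hu₁, hu₁'⟩ := exists_solution_evenSeries (lam := lam) hx₀ hf hf0 hfq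
  obtain ⟨u₂, hconv₂, hode₂, hu₂, hu₂'⟩ := exists_solution_oddSeries (lam := lam) hx₀ hf hf0 hfq
  exact ⟨u₁, u₂, hconv₁, hconv₂, hode₁, hode₂, hu₁, hu₁', hu₂, hu₂'⟩

/-- SPPS representation: `u₁ = ∑ λ^k φ_{2k}/(2k)!` and `u₂ = ∑ λ^k φ_{2k+1}/(2k+1)!`
converge uniformly on `[a,b]`, satisfy `u'' - q u = λ u` and the stated initial
conditions at `x₀`. -/
theorem stmt_10 (a b x₀ : ℝ) (hab : a < b) (hx₀ : x₀ ∈ Set.Icc a b)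
    (q f : ℝ → ℂ) (lam : ℂ)
    (hq : ContinuousOn q (Set.Icc a b))
    (hf : ContDiffOn ℝ 2 f (Set.Icc a b))
    (hf0 : ∀ x ∈ Set.Icc a b, f x ≠ 0)
    (hfq : ∀ x ∈ Set.Icc a b, deriv (deriv f) x = q x * f x) :
    ∃ u₁ u₂ : ℝ → ℂ,
      TendstoUniformlyOn
        (fun N x => ∑ k ∈ Finset.range (N + 1),
          lam ^ k / ((2 * k).factorial : ℂ) * phiSys f x₀ (2 * k) x)
        u₁ atTop (Set.Icc a b) ∧
      TendstoUniformlyOn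
        (fun N x => ∑ k ∈ Finset.range (N + 1),
          lam ^ k / ((2 * k + 1).factorial : ℂ) * phiSys f x₀ (2 * k + 1) x)
        u₂ atTop (Set.Icc a b) ∧
      (∀ x ∈ Set.Ioo a b, deriv (deriv u₁) x - q x * u₁ x = lam * u₁ x) ∧
      (∀ x ∈ Set.Ioo a b, deriv (deriv u₂) x - q x * u₂ x = lam * u₂ x) ∧
      u₁ x₀ = f x₀ ∧ deriv u₁ x₀ = deriv f x₀ ∧
      u₂ x₀ = 0 ∧ deriv u₂ x₀ = 1 / f x₀ :=
  stmt_10_general a b x₀ hx₀ q f lam hf hf0 hfq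
end

section
/- Coefficient recovery for f-polynomials: if P_n = ∑_{k=0}^n α_k φ_k is an f-polynomial built from the recursive-integral system φ_k with base point x₀, then α_k = d_k^f[P_n](x₀)/k! for each 0 ≤ k ≤ n. -/
/-- The generalized (`f`-) derivatives. -/
noncomputable def dgen (f : ℝ → ℂ) : ℕ → (ℝ → ℂ) → ℝ → ℂ
  | 0, g => g
  | k + 1, g => fun x =>
      f x ^ ((-1 : ℤ) ^ k) * deriv (fun y => f y ^ ((-1 : ℤ) ^ (k + 1)) * dgen f k g y) x

/-- The recursive integrals behind `φ_m`; moving the parity of `m` into the weight lets `X` and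
`X̃` share one recursion (`phiIntegrals_succ`). -/
noncomputable def phiIntegrals (f : ℝ → ℂ) (x₀ : ℝ) (m : ℕ) : ℕ → ℝ → ℂ :=
  if m % 2 = 1 then Xr f x₀ else Xt f x₀

section Integrals

variable {f : ℝ → ℂ} {x₀ : ℝ}

lemma phiSys_eq_mul_phiIntegrals (m : ℕ) (x : ℝ) :
    phiSys f x₀ m x = f x * phiIntegrals f x₀ m m x := by
  unfold phiSys phiIntegrals
  split_ifs <;> rfl

lemma phiIntegrals_zero (m : ℕ) : phiIntegrals f x₀ m 0 = fun _ => 1 := by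
  unfold phiIntegrals
  split_ifs <;> rfl

lemma phiIntegrals_succ (m j : ℕ) (x : ℝ) :
    phiIntegrals f x₀ m (j + 1) x =
      (j + 1 : ℂ) * ∫ s in x₀..x, phiIntegrals f x₀ m j s * f s ^ (2 * (-1 : ℤ) ^ (j + m)) := by
  have hsq (s : ℝ) (e : ℤ) : (f s ^ 2) ^ e = f s ^ (2 * e) := by
    rw [zpow_mul, zpow_ofNat]
  unfold phiIntegrals
  split_ifs with hm
  · have hsign : (-1 : ℤ) ^ (j + m) = (-1) ^ (j + 1) := by
      rw [pow_add, (Nat.odd_iff.mpr hm).neg_one_pow, pow_succ]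
    simp only [Xr, hsq, hsign]
  · have hsign : (-1 : ℤ) ^ (j + m) = (-1) ^ j := by
      rw [pow_add, (Nat.even_iff.mpr (Nat.mod_two_ne_one.mp hm)).neg_one_pow, mul_one]
    simp only [Xt, hsq, hsign]

lemma phiIntegrals_succ_base (m j : ℕ) : phiIntegrals f x₀ m (j + 1) x₀ = 0 := by
  rw [phiIntegrals_succ, intervalIntegral.integral_same, mul_zero]

variable (hf : Continuous f) (hf0 : ∀ x, f x ≠ 0)
include hf hf0

lemma hasDerivAt_phiIntegrals_succ {m j : ℕ} (hZ : Continuous (phiIntegrals f x₀ m j))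
    (x : ℝ) :
    HasDerivAt (phiIntegrals f x₀ m (j + 1))
      ((j + 1 : ℂ) * (phiIntegrals f x₀ m j x * f x ^ (2 * (-1 : ℤ) ^ (j + m)))) x := by
  have hweight : Continuous fun s => f s ^ (2 * (-1 : ℤ) ^ (j + m)) :=
    hf.zpow₀ _ fun s => Or.inl (hf0 s)
  rw [show phiIntegrals f x₀ m (j + 1) = _ from funext (phiIntegrals_succ m j)]
  exact ((hZ.mul hweight).integral_hasStrictDerivAt x₀ x).hasDerivAt.const_mul _

lemma continuous_phiIntegrals (m j : ℕ) : Continuous (phiIntegrals f x₀ m j) := by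
  induction j with
  | zero => rw [phiIntegrals_zero]; exact continuous_const
  | succ j ih =>
    exact continuous_iff_continuousAt.mpr fun x =>
      (hasDerivAt_phiIntegrals_succ hf hf0 ih x).continuousAt

lemma differentiable_phiIntegrals (m j : ℕ) : Differentiable ℝ (phiIntegrals f x₀ m j) := by
  cases j with
  | zero => rw [phiIntegrals_zero]; exact differentiable_const 1
  | succ j =>
    exact fun x =>
      (hasDerivAt_phiIntegrals_succ hf hf0 (continuous_phiIntegrals hf hf0 m j) x).differentiableAt

end Integrals

section Dgen

variable {f : ℝ → ℂ}

lemma dgen_succ (k : ℕ) (g : ℝ → ℂ) (x : ℝ) :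
    dgen f (k + 1) g x =
      f x ^ ((-1 : ℤ) ^ k) * deriv (fun y => f y ^ ((-1 : ℤ) ^ (k + 1)) * dgen f k g y) x :=
  rfl

lemma dgen_sum {ι : Type*} (s : Finset ι) (c : ι → ℂ) (g : ι → ℝ → ℂ) (k : ℕ)
    (hg : ∀ i ∈ s, ∀ j < k,
      Differentiable ℝ fun y => f y ^ ((-1 : ℤ) ^ (j + 1)) * dgen f j (g i) y) :
    dgen f k (fun x => ∑ i ∈ s, c i * g i x) =
      fun x => ∑ i ∈ s, c i * dgen f k (g i) x := by
  induction k with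
  | zero => rfl
  | succ k ih =>
    funext x
    have hinner :
        (fun y => f y ^ ((-1 : ℤ) ^ (k + 1)) * dgen f k (fun x => ∑ i ∈ s, c i * g i x) y) =
          fun y => ∑ i ∈ s, c i * (f y ^ ((-1 : ℤ) ^ (k + 1)) * dgen f k (g i) y) := by
      rw [ih fun i hi j hj => hg i hi j (by omega)]
      funext y
      rw [Finset.mul_sum]
      exact Finset.sum_congr rfl fun i _ => by ring
    rw [dgen_succ, hinner, deriv_fun_sum fun i hi => ((hg i hi k k.lt_succ_self) x).const_mul _,
      Finset.mul_sum]
    refine Finset.sum_congr rfl fun i hi => ?_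
    rw [deriv_const_mul _ (hg i hi k k.lt_succ_self x), dgen_succ]
    ring

lemma zpow_neg_one_pow_succ_mul {a : ℂ} (ha : a ≠ 0) (k : ℕ) :
    a ^ ((-1 : ℤ) ^ (k + 1)) * a ^ ((-1 : ℤ) ^ k) = 1 := by
  rw [pow_succ, mul_neg_one, zpow_neg_mul_zpow_self _ ha]

variable {x₀ : ℝ} (hf : Continuous f) (hf0 : ∀ x, f x ≠ 0)
include hf hf0

/-- Valid for all `k`: when `k > m`, `m - k` truncates to `0` but `m.descFactorial k = 0`. -/
lemma dgen_phiSys (m k : ℕ) (x : ℝ) :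
    dgen f k (phiSys f x₀ m) x =
      m.descFactorial k * (f x ^ ((-1 : ℤ) ^ k) * phiIntegrals f x₀ m (m - k) x) := by
  induction k generalizing x with
  | zero => simp [dgen, phiSys_eq_mul_phiIntegrals]
  | succ k ih =>
    have hinner : (fun y => f y ^ ((-1 : ℤ) ^ (k + 1)) * dgen f k (phiSys f x₀ m) y)
        = fun y => m.descFactorial k * phiIntegrals f x₀ m (m - k) y := by
      funext y
      rw [ih, mul_left_comm, ← mul_assoc (f y ^ _), zpow_neg_one_pow_succ_mul (hf0 y), one_mul]
    rw [dgen_succ, hinner, Nat.descFactorial_succ]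
    rcases hmk : m - k with _ | j
    · simp only [phiIntegrals_zero, deriv_const, mul_zero, Nat.cast_zero, zero_mul]
    · have hderiv := ((hasDerivAt_phiIntegrals_succ (x₀ := x₀) hf hf0
        (continuous_phiIntegrals hf hf0 m j) x).const_mul (m.descFactorial k : ℂ)).deriv
      have hsign : (-1 : ℤ) ^ (j + m) = (-1) ^ (k + 1) := by
        rw [show j + m = 2 * j + (k + 1) by omega, pow_add, pow_mul]
        norm_num
      have hexp : f x ^ ((-1 : ℤ) ^ k) * f x ^ (2 * (-1 : ℤ) ^ (k + 1)) =
          f x ^ ((-1 : ℤ) ^ (k + 1)) := by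
        rw [← zpow_add₀ (hf0 x), pow_succ]
        ring_nf
      rw [hderiv, hsign, show m - (k + 1) = j by omega, ← hexp]
      push_cast
      ring

lemma differentiable_zpow_mul_dgen_phiSys (m k : ℕ) :
    Differentiable ℝ fun y => f y ^ ((-1 : ℤ) ^ (k + 1)) * dgen f k (phiSys f x₀ m) y := by
  have hinner : (fun y => f y ^ ((-1 : ℤ) ^ (k + 1)) * dgen f k (phiSys f x₀ m) y)
      = fun y => m.descFactorial k * phiIntegrals f x₀ m (m - k) y := by
    funext y
    rw [dgen_phiSys hf hf0, mul_left_comm, ← mul_assoc (f y ^ _),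
      zpow_neg_one_pow_succ_mul (hf0 y), one_mul]
  rw [hinner]
  exact (differentiable_phiIntegrals hf hf0 m _).const_mul _

lemma dgen_phiSys_base (hf1 : f x₀ = 1) (m k : ℕ) :
    dgen f k (phiSys f x₀ m) x₀ = if m = k then (k.factorial : ℂ) else 0 := by
  rw [dgen_phiSys hf hf0, hf1, one_zpow, one_mul]
  rcases lt_trichotomy m k with hlt | rfl | hgt
  · rw [if_neg hlt.ne, Nat.descFactorial_eq_zero_iff_lt.mpr hlt, Nat.cast_zero, zero_mul]
  · simp only [if_pos, Nat.sub_self, phiIntegrals_zero, Nat.descFactorial_self, mul_one]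
  · obtain ⟨j, hj⟩ : ∃ j, m - k = j + 1 := ⟨m - k - 1, by omega⟩
    rw [if_neg hgt.ne', hj, phiIntegrals_succ_base, mul_zero]

end Dgen

/-- Coefficient recovery for `f`-polynomials: if `P_n = ∑_{k=0}^n α_k φ_k`,
then `α_k = d_k^f[P_n](x₀)/k!` for each `0 ≤ k ≤ n`. -/
theorem stmt_14 (x₀ : ℝ) (n : ℕ) (f : ℝ → ℂ)
    (hf : Continuous f) (hf0 : ∀ x : ℝ, f x ≠ 0) (hf1 : f x₀ = 1)
    (α : ℕ → ℂ) :
    ∀ k ≤ n,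
      α k = dgen f k (fun x => ∑ m ∈ Finset.range (n + 1), α m * phiSys f x₀ m x) x₀ /
        (k.factorial : ℂ) := by
  intro k hk
  rw [dgen_sum _ _ _ _ fun m _ j _ => differentiable_zpow_mul_dgen_phiSys hf hf0 m j]
  simp only [dgen_phiSys_base hf hf0 hf1, mul_ite, mul_zero, Finset.sum_ite_eq',
    Finset.mem_range, if_pos (Nat.lt_succ_of_le hk)]
  rw [mul_div_cancel_right₀ _ (Nat.cast_ne_zero.mpr k.factorial_ne_zero)]
end

section
/- Kernel estimate: let q : [-b,b] → ℂ be continuous with c = max|q|, and let H : {|u|+|v| ≤ b} → ℂ be the solution of the Goursat problem ∂²H/∂u∂v = q(u+v) H with H(u,0) = h/2 + (1/2)∫₀ᵘ q(s) ds and H(0,v) = h/2. Then |H(u,v)| ≤ (|h|/2) ∑_{k≥0} c^k |uv|^k/(k!)² + (1/2) ∑_{k≥0} c^{k+1} |u|^{k+1} |v|^k / ((k+1)! k!), i.e. |H(u,v)| ≤ (|h|/2) I₀(2√(c|uv|)) + (√(c)|u|/(2√|uv|)) I₁(2√(c|uv|)) when uv ≠ 0, where I₀, I₁ are modified Bessel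 functions of the first kind. -/
/-!
Successive approximations. If `‖H u v‖ ≤ F |u| |v|` on the domain, the integral system gives
`‖H u v‖ ≤ ‖h‖/2 + c|u|/2 + c ∫₀^|u| ∫₀^|v| F`. Starting from a bound `M` of `H` on the compact
domain, `n` such steps give the `n`-th partial sums of the two series plus the remainder
`M cⁿ |u|ⁿ |v|ⁿ / (n!)²`, which tends to `0`.
-/

open MeasureTheory Finset Filter Topology Nat

lemma norm_intervalIntegral_le_of_le_comp_abs {E : Type*} [NormedAddCommGroup E]
    [NormedSpace ℝ E] {f : ℝ → E} {g : ℝ → ℝ} {v : ℝ}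
    (hg : IntervalIntegrable g volume 0 |v|) (hfg : ∀ x ∈ Set.uIcc 0 v, ‖f x‖ ≤ g |x|) :
    ‖∫ x in (0 : ℝ)..v, f x‖ ≤ ∫ x in (0 : ℝ)..|v|, g x := by
  rcases le_or_gt 0 v with hv | hv
  · rw [abs_of_nonneg hv] at hg ⊢
    refine intervalIntegral.norm_integral_le_of_norm_le hv
      (Eventually.of_forall fun x hx => ?_) hg
    simpa [abs_of_pos hx.1] using hfg x (Set.Ioc_subset_Icc_self.trans Set.Icc_subset_uIcc hx)
  · rw [abs_of_neg hv] at hg ⊢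
    have hflip : ∫ x in (0 : ℝ)..v, f x = -∫ x in (0 : ℝ)..-v, f (-x) := by
      rw [intervalIntegral.integral_comp_neg, neg_neg, neg_zero, intervalIntegral.integral_symm]
    rw [hflip, norm_neg]
    refine intervalIntegral.norm_integral_le_of_norm_le (by linarith)
      (Eventually.of_forall fun x hx => ?_) hg
    have hmem : -x ∈ Set.uIcc 0 v := by
      rw [Set.uIcc_of_ge hv.le]; constructor <;> linarith [hx.1, hx.2]
    simpa [abs_of_pos hx.1] using hfg (-x) hmem

lemma abs_le_abs_of_mem_uIcc_zero {x v : ℝ} (hx : x ∈ Set.uIcc 0 v) : |x| ≤ |v| := by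
  simpa using Set.abs_sub_left_of_mem_uIcc hx

lemma isCompact_abs_add_abs_le (b : ℝ) : IsCompact {p : ℝ × ℝ | |p.1| + |p.2| ≤ b} := by
  refine Metric.isCompact_of_isClosed_isBounded
    (isClosed_le (by fun_prop) continuous_const)
    ((Metric.isBounded_closedBall (x := 0) (r := b)).subset ?_)
  rintro ⟨x, y⟩ (hp : |x| + |y| ≤ b)
  rw [mem_closedBall_zero_iff, Prod.norm_def, Real.norm_eq_abs, Real.norm_eq_abs, max_le_iff]
  constructor <;> linarith [abs_nonneg x, abs_nonneg y]

noncomputable def powDivFact (n : ℕ) (x : ℝ) : ℝ := x ^ n / n !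

@[fun_prop]
lemma continuous_powDivFact (n : ℕ) : Continuous (powDivFact n) := by
  unfold powDivFact; fun_prop

@[simp]
lemma powDivFact_zero (x : ℝ) : powDivFact 0 x = 1 := by simp [powDivFact]

@[simp]
lemma powDivFact_one (x : ℝ) : powDivFact 1 x = x := by simp [powDivFact]

lemma powDivFact_nonneg (n : ℕ) {x : ℝ} (hx : 0 ≤ x) : 0 ≤ powDivFact n x := by
  unfold powDivFact; positivity

lemma powDivFact_le_pow (n : ℕ) {x : ℝ} (hx : 0 ≤ x) : powDivFact n x ≤ x ^ n :=
  div_le_self (pow_nonneg hx n) (by exact_mod_cast n.factorial_pos)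

lemma pow_mul_powDivFact (n : ℕ) (x y : ℝ) : x ^ n * powDivFact n y = powDivFact n (x * y) := by
  simp only [powDivFact, mul_pow, mul_div_assoc]

lemma summable_powDivFact (x : ℝ) : Summable fun n => powDivFact n x :=
  Real.summable_pow_div_factorial x

lemma tendsto_powDivFact_atTop (x : ℝ) : Tendsto (fun n => powDivFact n x) atTop (𝓝 0) :=
  FloorSemiring.tendsto_pow_div_factorial_atTop x

lemma integral_powDivFact (n : ℕ) (t : ℝ) :
    ∫ y in (0 : ℝ)..t, powDivFact n y = powDivFact (n + 1) t := by
  simp only [powDivFact, intervalIntegral.integral_div, integral_pow, Nat.factorial_succ]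
  push_cast
  field_simp
  simp

noncomputable def picardBound (α β M c : ℝ) (n : ℕ) (s t : ℝ) : ℝ :=
  ∑ k ∈ range n, (α * (c ^ k * powDivFact k s * powDivFact k t) +
      β * (c ^ (k + 1) * powDivFact (k + 1) s * powDivFact k t)) +
    M * (c ^ n * powDivFact n s * powDivFact n t)

lemma continuous_picardBound (α β M c : ℝ) (n : ℕ) :
    Continuous (Function.uncurry (picardBound α β M c n)) := by
  unfold Function.uncurry picardBound; fun_prop

lemma picardBound_succ (α β M c : ℝ) (n : ℕ) (s t : ℝ) :
    α + β * c * s + c * ∫ x in (0 : ℝ)..s, ∫ y in (0 : ℝ)..t, picardBound α β M c n x y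
      = picardBound α β M c (n + 1) s t := by
  unfold picardBound
  simp (disch := first
      | exact (by fun_prop : Continuous _).intervalIntegrable _ _
      | exact fun _ _ => (by fun_prop : Continuous _).intervalIntegrable _ _) only
    [intervalIntegral.integral_add, intervalIntegral.integral_finsetSum,
      intervalIntegral.integral_const_mul, intervalIntegral.integral_mul_const,
      integral_powDivFact]
  rw [sum_range_succ' _ n, mul_add, mul_sum]
  simp only [zero_add, powDivFact_zero, powDivFact_one, pow_zero]
  ring_nf

lemma tendsto_picardBound (α β M : ℝ) {c s t : ℝ} (hc : 0 ≤ c) (hs : 0 ≤ s)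
    (ht : 0 ≤ t) :
    Tendsto (fun n => picardBound α β M c n s t) atTop
      (𝓝 (α * ∑' k, c ^ k * powDivFact k s * powDivFact k t +
        β * ∑' k, c ^ (k + 1) * powDivFact (k + 1) s * powDivFact k t)) := by
  have hA0 : ∀ k, 0 ≤ c ^ k * powDivFact k s * powDivFact k t := fun k => by
    have := powDivFact_nonneg k hs; have := powDivFact_nonneg k ht; positivity
  have hB0 : ∀ k, 0 ≤ c ^ (k + 1) * powDivFact (k + 1) s * powDivFact k t := fun k => by
    have := powDivFact_nonneg (k + 1) hs; have := powDivFact_nonneg k ht; positivity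
  have hA : ∀ k, c ^ k * powDivFact k s * powDivFact k t ≤ powDivFact k (c * s * t) :=
    fun k =>
    calc c ^ k * powDivFact k s * powDivFact k t ≤ c ^ k * s ^ k * powDivFact k t := by
          gcongr
          · exact powDivFact_nonneg k ht
          · exact powDivFact_le_pow k hs
      _ = powDivFact k (c * s * t) := by rw [← mul_pow, pow_mul_powDivFact]
  have hB : ∀ k, c ^ (k + 1) * powDivFact (k + 1) s * powDivFact k t ≤
      c * s * powDivFact k (c * s * t) := fun k =>
    calc c ^ (k + 1) * powDivFact (k + 1) s * powDivFact k t
        ≤ c ^ (k + 1) * s ^ (k + 1) * powDivFact k t := by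
          gcongr
          · exact powDivFact_nonneg k ht
          · exact powDivFact_le_pow (k + 1) hs
      _ = c * s * powDivFact k (c * s * t) := by
          rw [← pow_mul_powDivFact, mul_pow, pow_succ, pow_succ]; ring
  have hSA := Summable.of_nonneg_of_le hA0 hA (summable_powDivFact _)
  have hSB := Summable.of_nonneg_of_le hB0 hB ((summable_powDivFact _).mul_left (c * s))
  have hR : Tendsto (fun n => c ^ n * powDivFact n s * powDivFact n t) atTop (𝓝 0) :=
    squeeze_zero hA0 hA (tendsto_powDivFact_atTop _)
  simpa [picardBound] using
    ((hSA.hasSum.mul_left α).add (hSB.hasSum.mul_left β)).tendsto_sum_nat.add (hR.const_mul M)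

section IntegralSystem

variable {b c : ℝ} {h : ℂ} {q : ℝ → ℂ} {H G : ℝ → ℝ → ℂ} {F : ℝ → ℝ → ℝ}

lemma norm_G_le_of_integral_system (hc0 : 0 ≤ c) (hqc : ∀ x ∈ Set.Icc (-b) b, ‖q x‖ ≤ c)
    (hsys2 : ∀ u v : ℝ, |u| + |v| ≤ b →
        G u v = q u / 2 + ∫ v' in (0:ℝ)..v, q (u + v') * H u v')
    (hF : Continuous (Function.uncurry F))
    (hHF : ∀ u v : ℝ, |u| + |v| ≤ b → ‖H u v‖ ≤ F |u| |v|) {u v : ℝ} (huv : |u| + |v| ≤ b) :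
    ‖G u v‖ ≤ c / 2 + c * ∫ t in (0 : ℝ)..|v|, F |u| t := by
  have hu : |u| ≤ b := by linarith [abs_nonneg v]
  have hpoint : ∀ x ∈ Set.uIcc 0 v, ‖q (u + x) * H u x‖ ≤ c * F |u| |x| := by
    intro x hx
    have hux : |u| + |x| ≤ b := by linarith [abs_le_abs_of_mem_uIcc_zero hx]
    rw [norm_mul]
    exact mul_le_mul (hqc _ (abs_le.mp ((abs_add_le u x).trans hux))) (hHF u x hux)
      (norm_nonneg _) hc0
  rw [hsys2 u v huv, ← intervalIntegral.integral_const_mul]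
  calc ‖q u / 2 + ∫ x in (0 : ℝ)..v, q (u + x) * H u x‖
      ≤ ‖q u‖ / 2 + ‖∫ x in (0 : ℝ)..v, q (u + x) * H u x‖ := by
        simpa using norm_add_le (q u / 2) _
    _ ≤ c / 2 + ∫ t in (0 : ℝ)..|v|, c * F |u| t := by
        gcongr
        · exact hqc u (abs_le.mp hu)
        · exact norm_intervalIntegral_le_of_le_comp_abs
            ((by fun_prop : Continuous fun t => c * F |u| t).intervalIntegrable _ _) hpoint

lemma norm_H_le_of_integral_system (hc0 : 0 ≤ c) (hqc : ∀ x ∈ Set.Icc (-b) b, ‖q x‖ ≤ c)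
    (hsys1 : ∀ u v : ℝ, |u| + |v| ≤ b → H u v = h / 2 + ∫ u' in (0:ℝ)..u, G u' v)
    (hsys2 : ∀ u v : ℝ, |u| + |v| ≤ b →
        G u v = q u / 2 + ∫ v' in (0:ℝ)..v, q (u + v') * H u v')
    (hF : Continuous (Function.uncurry F))
    (hHF : ∀ u v : ℝ, |u| + |v| ≤ b → ‖H u v‖ ≤ F |u| |v|) {u v : ℝ} (huv : |u| + |v| ≤ b) :
    ‖H u v‖ ≤
      ‖h‖ / 2 + 1 / 2 * c * |u| + c * ∫ s in (0 : ℝ)..|u|, ∫ t in (0 : ℝ)..|v|, F s t := by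
  have hGF : ∀ x ∈ Set.uIcc 0 u, ‖G x v‖ ≤ c / 2 + c * ∫ t in (0 : ℝ)..|v|, F |x| t :=
    fun x hx => norm_G_le_of_integral_system hc0 hqc hsys2 hF hHF
      (by linarith [abs_le_abs_of_mem_uIcc_zero hx])
  have hint : Continuous fun s => ∫ t in (0 : ℝ)..|v|, F s t := by fun_prop
  rw [hsys1 u v huv]
  calc ‖h / 2 + ∫ x in (0 : ℝ)..u, G x v‖ ≤ ‖h‖ / 2 + ‖∫ x in (0 : ℝ)..u, G x v‖ := by
        simpa using norm_add_le (h / 2) _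
    _ ≤ ‖h‖ / 2 + ∫ s in (0 : ℝ)..|u|, (c / 2 + c * ∫ t in (0 : ℝ)..|v|, F s t) := by
        gcongr
        exact norm_intervalIntegral_le_of_le_comp_abs
          ((by fun_prop : Continuous _).intervalIntegrable _ _) hGF
    _ = ‖h‖ / 2 + 1 / 2 * c * |u| +
          c * ∫ s in (0 : ℝ)..|u|, ∫ t in (0 : ℝ)..|v|, F s t := by
        rw [intervalIntegral.integral_add intervalIntegrable_const
          ((hint.const_mul c).intervalIntegrable _ _), intervalIntegral.integral_const,
          intervalIntegral.integral_const_mul, smul_eq_mul, sub_zero]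
        ring

end IntegralSystem

theorem stmt_16_general (b : ℝ) (h : ℂ) (q : ℝ → ℂ) (c : ℝ) (hc0 : 0 ≤ c)
    (hqc : ∀ x ∈ Set.Icc (-b) b, ‖q x‖ ≤ c)
    (H G : ℝ → ℝ → ℂ)
    (hHcont : ContinuousOn (fun p : ℝ × ℝ => H p.1 p.2) {p : ℝ × ℝ | |p.1| + |p.2| ≤ b})
    (hsys1 : ∀ u v : ℝ, |u| + |v| ≤ b → H u v = h / 2 + ∫ u' in (0:ℝ)..u, G u' v)
    (hsys2 : ∀ u v : ℝ, |u| + |v| ≤ b →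
        G u v = q u / 2 + ∫ v' in (0:ℝ)..v, q (u + v') * H u v') :
    ∀ u v : ℝ, |u| + |v| ≤ b →
      ‖H u v‖ ≤
        (‖h‖ / 2) * (∑' k : ℕ, c ^ k * |u * v| ^ k / ((k.factorial : ℝ)) ^ 2) +
        (1 / 2) * (∑' k : ℕ, c ^ (k + 1) * |u| ^ (k + 1) * |v| ^ k /
          (((k + 1).factorial : ℝ) * (k.factorial : ℝ))) := by
  obtain ⟨M, hM⟩ := (isCompact_abs_add_abs_le b).exists_bound_of_continuousOn hHcont
  have hpicard : ∀ n u v, |u| + |v| ≤ b →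
      ‖H u v‖ ≤ picardBound (‖h‖ / 2) (1 / 2) M c n |u| |v| := by
    intro n
    induction n with
    | zero => exact fun u v huv => by simpa [picardBound] using hM (u, v) huv
    | succ n ih =>
      intro u v huv
      rw [← picardBound_succ]
      exact norm_H_le_of_integral_system hc0 hqc hsys1 hsys2 (continuous_picardBound ..) ih huv
  intro u v huv
  have hlim := ge_of_tendsto' (tendsto_picardBound (‖h‖ / 2) (1 / 2) M hc0 (abs_nonneg u)
    (abs_nonneg v)) fun n => hpicard n u v huv
  refine hlim.trans_eq ?_
  congr 2 <;> refine tsum_congr fun k => ?_ <;> simp only [powDivFact, abs_mul] <;> ring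

/-- Kernel estimate: if `H` solves the Goursat problem
`∂²H/∂u∂v = q(u+v) H`, `H(u,0) = h/2 + (1/2)∫₀ᵘ q`, `H(0,v) = h/2`
(equivalently, the integral system `H(u,v) = h/2 + ∫₀ᵘ G(u',v) du'`,
`G(u,v) = q(u)/2 + ∫₀ᵛ q(u+v') H(u,v') dv'`) on `{|u|+|v| ≤ b}` and
`|q| ≤ c`, then
`|H(u,v)| ≤ (|h|/2) ∑ cᵏ|uv|ᵏ/(k!)² + (1/2) ∑ c^{k+1}|u|^{k+1}|v|ᵏ/((k+1)!k!)`. -/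
theorem stmt_16 (b : ℝ) (hb : 0 < b) (h : ℂ) (q : ℝ → ℂ) (c : ℝ) (hc0 : 0 ≤ c)
    (hq : ContinuousOn q (Set.Icc (-b) b))
    (hqc : ∀ x ∈ Set.Icc (-b) b, ‖q x‖ ≤ c)
    (H G : ℝ → ℝ → ℂ)
    (hHcont : ContinuousOn (fun p : ℝ × ℝ => H p.1 p.2) {p : ℝ × ℝ | |p.1| + |p.2| ≤ b})
    (hGcont : ContinuousOn (fun p : ℝ × ℝ => G p.1 p.2) {p : ℝ × ℝ | |p.1| + |p.2| ≤ b})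
    (hsys1 : ∀ u v : ℝ, |u| + |v| ≤ b → H u v = h / 2 + ∫ u' in (0:ℝ)..u, G u' v)
    (hsys2 : ∀ u v : ℝ, |u| + |v| ≤ b →
        G u v = q u / 2 + ∫ v' in (0:ℝ)..v, q (u + v') * H u v')
    (hpde : ∀ u v : ℝ, |u| + |v| ≤ b →
        deriv (fun v' => deriv (fun u' => H u' v') u) v = q (u + v) * H u v)
    (hbd1 : ∀ u : ℝ, |u| ≤ b → H u 0 = h / 2 + (1 / 2) * ∫ s in (0:ℝ)..u, q s)
    (hbd2 : ∀ v : ℝ, |v| ≤ b → H 0 v = h / 2) :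
    ∀ u v : ℝ, |u| + |v| ≤ b →
      ‖H u v‖ ≤
        (‖h‖ / 2) * (∑' k : ℕ, c ^ k * |u * v| ^ k / ((k.factorial : ℝ)) ^ 2) +
        (1 / 2) * (∑' k : ℕ, c ^ (k + 1) * |u| ^ (k + 1) * |v| ^ k /
          (((k + 1).factorial : ℝ) * (k.factorial : ℝ))) :=
  stmt_16_general b h q c hc0 hqc H G hHcont hsys1 hsys2
end

section
/- Inverse approximation theorem (analytic core): suppose h̃ ∈ C[-b,b] and there exist polynomials P_n of degree ≤ n with ‖h̃ − P_n‖_∞ ≤ M̃/n^{r+ε} for all n ≥ 1, where r ∈ ℕ, M̃, ε > 0. Then h̃ ∈ C^r(-b,b): on every compact subinterval [-d,d] ⊂ (-b,b), the telescoping series P_1 + ∑_{k≥0}(P_{2^{k+1}} − P_{2^k}) converges in C^r([-d,d]) norm to h̃, using Bernstein's inequality |P_n'(x)| ≤ n‖P_n‖/√(b²−x²). -/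
/-!
Write `z = (b / 2) (w + w⁻¹)` with `‖w‖ ≤ 1`. If `p` is a real polynomial of degree `≤ n` bounded
by `A` on `[-b, b]`, then `w ↦ wⁿ p((b / 2) (w + w⁻¹))` is a polynomial bounded by `A` on the unit
circle, hence on the unit disc, so `‖p z‖ ≤ A ‖w‖⁻ⁿ ≤ A exp (2 n |Im z| / √(b² - (Re z)²))`. On a
disc of radius `(b - d) / (4 n)` around a point of `[-d, d]` this is at most `e A`, and Cauchy's
estimate yields the interior Bernstein inequality `|p⁽ⁱ⁾| ≤ Cᵢ nⁱ A` on `[-d, d]`. The differences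
`P (2 ^ (k + 1)) - P (2 ^ k)` have sup norm `O(2 ^ (-k (r + ε)))`, so the `i`-th derivatives of the
telescoping series `P 1 + ∑ₖ (P (2 ^ (k + 1)) - P (2 ^ k))` are dominated by
`O(2 ^ (k (i - r - ε)))`, which is summable for `i ≤ r`; termwise differentiation shows that its
sum `g` is `C^r` on `(-d, d)`.
-/

open Polynomial Real

theorem iteratedDeriv_aeval {𝕜 R : Type*} [NontriviallyNormedField 𝕜] [CommSemiring R]
    [Algebra R 𝕜] (p : R[X]) (i : ℕ) :
    iteratedDeriv i (fun z : 𝕜 => aeval z p) = fun z => aeval z (derivative^[i] p) := by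
  induction i with
  | zero => simp
  | succ i ih =>
    ext z
    rw [iteratedDeriv_succ, ih, Polynomial.deriv_aeval, Function.iterate_succ_apply']

theorem norm_aeval_ofReal (p : ℝ[X]) (x : ℝ) : ‖aeval (x : ℂ) p‖ = |p.eval x| := by
  rw [← Complex.coe_algebraMap, aeval_algebraMap_apply_eq_algebraMap_eval, Complex.coe_algebraMap,
    Complex.norm_real, Real.norm_eq_abs]

theorem exists_eval_eq_pow_mul_eval_joukowski {K : Type*} [Field K] (q : K[X]) (c : K) {n : ℕ}
    (hdeg : q.natDegree ≤ n) :
    ∃ Q : K[X], ∀ w ≠ 0, Q.eval w = w ^ n * q.eval (c * (w + w⁻¹)) := by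
  refine ⟨∑ j ∈ Finset.range (n + 1), C (q.coeff j * c ^ j) * (X ^ 2 + 1) ^ j * X ^ (n - j),
    fun w hw => ?_⟩
  rw [eval_finsetSum, eval_eq_sum_range' (Nat.lt_succ_of_le hdeg), Finset.mul_sum]
  refine Finset.sum_congr rfl fun j hj => ?_
  have hjn : j ≤ n := Nat.lt_succ_iff.mp (Finset.mem_range.1 hj)
  simp only [eval_mul, eval_pow, eval_add, eval_one, eval_C, eval_X]
  rw [pow_sub₀ w hw hjn, show w + w⁻¹ = (w ^ 2 + 1) / w by field_simp, mul_pow, div_pow]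
  field_simp

theorem exists_joukowski_preimage {c : ℂ} (hc : c ≠ 0) (z : ℂ) :
    ∃ w ≠ 0, ‖w‖ ≤ 1 ∧ c * (w + w⁻¹) = z := by
  obtain ⟨s, hs⟩ := IsAlgClosed.exists_pow_nat_eq ((z / c) ^ 2 - 4) two_pos
  have key : ∀ w₁ w₂ : ℂ, w₁ * w₂ = 1 → w₁ + w₂ = z / c → ‖w₁‖ ≤ 1 →
      ∃ w ≠ 0, ‖w‖ ≤ 1 ∧ c * (w + w⁻¹) = z := fun w₁ w₂ hprod hsum hw₁ =>
    ⟨w₁, left_ne_zero_of_mul_eq_one hprod, hw₁, by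
      rw [inv_eq_of_mul_eq_one_right hprod, hsum]; field_simp⟩
  have hprod : (z / c + s) / 2 * ((z / c - s) / 2) = 1 := by linear_combination -hs / 4
  have hnorm : ‖(z / c + s) / 2‖ * ‖(z / c - s) / 2‖ = 1 := by rw [← norm_mul, hprod, norm_one]
  rcases le_total ‖(z / c + s) / 2‖ 1 with h | h
  · exact key _ _ hprod (by ring) h
  · refine key _ _ (by rw [mul_comm, hprod]) (by ring) ?_
    nlinarith [norm_nonneg ((z / c - s) / 2)]

-- With `a = ‖w‖`, the point `(b / 2) (w + w⁻¹)` lies on the ellipse with semi-axes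
-- `(b / 2) (a⁻¹ + a) ≥ b` and `(b / 2) (a⁻¹ - a)`.
theorem joukowski_sq_inv_norm_sub_norm_mul_le {w : ℂ} (hw : w ≠ 0) (b : ℝ) :
    (‖w‖⁻¹ - ‖w‖) ^ 2 * (b ^ 2 - ((b / 2 : ℂ) * (w + w⁻¹)).re ^ 2)
      ≤ 4 * ((b / 2 : ℂ) * (w + w⁻¹)).im ^ 2 := by
  set a := ‖w‖
  have ha : 0 < a := norm_pos_iff.mpr hw
  have hxy : w.re ^ 2 + w.im ^ 2 = a ^ 2 := by
    rw [Complex.sq_norm, Complex.normSq_apply]; ring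
  have hre : ((b / 2 : ℂ) * (w + w⁻¹)).re = b / 2 * w.re * (1 + (a ^ 2)⁻¹) := by
    simp [Complex.inv_re, ← Complex.sq_norm]; ring
  have him : ((b / 2 : ℂ) * (w + w⁻¹)).im = b / 2 * w.im * (1 - (a ^ 2)⁻¹) := by
    simp [Complex.inv_im, ← Complex.sq_norm]; ring
  rw [hre, him, ← sub_nonneg]
  have : 4 * (b / 2 * w.im * (1 - (a ^ 2)⁻¹)) ^ 2
      - (a⁻¹ - a) ^ 2 * (b ^ 2 - (b / 2 * w.re * (1 + (a ^ 2)⁻¹)) ^ 2)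
      = (b * w.re * (a ^ 2 - 1) ^ 2 / (2 * a ^ 3)) ^ 2 := by
    field_simp
    linear_combination (b ^ 2 * (a ^ 2 - 1) ^ 2 * 4 * a ^ 2) * hxy
  rw [this]
  positivity

theorem pow_norm_mul_norm_eval_joukowski_le (q : ℂ[X]) {n : ℕ} (hdeg : q.natDegree ≤ n) (c : ℂ)
    {A : ℝ} (hA : ∀ w : ℂ, ‖w‖ = 1 → ‖q.eval (c * (w + w⁻¹))‖ ≤ A) {w : ℂ} (hw₀ : w ≠ 0)
    (hw : ‖w‖ ≤ 1) : ‖w‖ ^ n * ‖q.eval (c * (w + w⁻¹))‖ ≤ A := by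
  obtain ⟨Q, hQ⟩ := exists_eval_eq_pow_mul_eval_joukowski q c hdeg
  have hsphere : ∀ v ∈ frontier (Metric.ball (0 : ℂ) 1), ‖Q.eval v‖ ≤ A := by
    intro v hv
    rw [frontier_ball 0 one_ne_zero, mem_sphere_zero_iff_norm] at hv
    rw [hQ v (norm_ne_zero_iff.mp (by rw [hv]; exact one_ne_zero)), norm_mul, norm_pow, hv,
      one_pow, one_mul]
    exact hA v hv
  have hmax := Complex.norm_le_of_forall_mem_frontier_norm_le Metric.isBounded_ball
    Q.differentiable.diffContOnCl hsphere
    (by rwa [closure_ball 0 one_ne_zero, mem_closedBall_zero_iff])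
  rwa [hQ w hw₀, norm_mul, norm_pow] at hmax

theorem norm_aeval_le_mul_exp (p : ℝ[X]) {n : ℕ} (hdeg : p.natDegree ≤ n) {b A : ℝ}
    (hA : ∀ y ∈ Set.Icc (-b) b, |p.eval y| ≤ A) {z : ℂ} (hz : |z.re| < b) :
    ‖aeval z p‖ ≤ A * exp (2 * n * |z.im| / √(b ^ 2 - z.re ^ 2)) := by
  have hb : 0 < b := (abs_nonneg _).trans_lt hz
  have hA₀ : 0 ≤ A := (abs_nonneg _).trans (hA 0 ⟨by linarith, hb.le⟩)
  set q := p.map (algebraMap ℝ ℂ)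
  have hq : ∀ v, q.eval v = aeval v p := fun v => eval_map_algebraMap p v
  have hsphere : ∀ v : ℂ, ‖v‖ = 1 → ‖q.eval ((b / 2 : ℂ) * (v + v⁻¹))‖ ≤ A := by
    intro v hv
    have hre : (b / 2 : ℂ) * (v + v⁻¹) = ((b * v.re : ℝ) : ℂ) := by
      rw [Complex.inv_eq_conj hv, Complex.add_conj]; push_cast; ring
    have hvre : |v.re| ≤ 1 := hv ▸ Complex.abs_re_le_norm v
    rw [hre, hq, norm_aeval_ofReal]
    refine hA _ (abs_le.mp ?_)
    rw [abs_mul, abs_of_pos hb]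
    exact mul_le_of_le_one_right hb.le hvre
  obtain ⟨w, hw₀, hw, rfl⟩ := exists_joukowski_preimage (c := (b / 2 : ℂ)) (by simp [hb.ne']) z
  have hbound := pow_norm_mul_norm_eval_joukowski_le q (natDegree_map_le.trans hdeg) _ hsphere
    hw₀ hw
  rw [hq] at hbound
  set z := (b / 2 : ℂ) * (w + w⁻¹)
  set a := ‖w‖
  have ha : 0 < a := norm_pos_iff.mpr hw₀
  have hbre : 0 < b ^ 2 - z.re ^ 2 := by nlinarith [abs_nonneg z.re, sq_abs z.re]
  have hs : 0 < √(b ^ 2 - z.re ^ 2) := sqrt_pos.mpr hbre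
  -- the Joukowski preimage of a point close to the segment lies close to the unit circle
  have hgap : a⁻¹ - a ≤ 2 * |z.im| / √(b ^ 2 - z.re ^ 2) := by
    rw [le_div_iff₀ hs]
    have hnonneg : 0 ≤ (a⁻¹ - a) * √(b ^ 2 - z.re ^ 2) :=
      mul_nonneg (by linarith [(one_le_inv₀ ha).mpr hw]) hs.le
    refine (pow_le_pow_iff_left₀ hnonneg (by positivity) two_ne_zero).mp ?_
    rw [mul_pow, mul_pow, sq_sqrt hbre.le, sq_abs]
    simpa [a, z, show (2 : ℝ) ^ 2 = 4 by norm_num] using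
      joukowski_sq_inv_norm_sub_norm_mul_le hw₀ b
  have hpow : a⁻¹ ^ n ≤ exp (2 * n * |z.im| / √(b ^ 2 - z.re ^ 2)) := by
    calc a⁻¹ ^ n ≤ exp (a⁻¹ - a) ^ n :=
          pow_le_pow_left₀ (by positivity) (by linarith [add_one_le_exp (a⁻¹ - a)]) n
      _ = exp (n * (a⁻¹ - a)) := (exp_nat_mul _ n).symm
      _ ≤ _ := by
        rw [exp_le_exp]
        exact (mul_le_mul_of_nonneg_left hgap n.cast_nonneg).trans_eq (by ring)
  calc ‖aeval z p‖ = a⁻¹ ^ n * (a ^ n * ‖aeval z p‖) := by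
        rw [← mul_assoc, ← mul_pow, inv_mul_cancel₀ ha.ne', one_pow, one_mul]
    _ ≤ exp (2 * n * |z.im| / √(b ^ 2 - z.re ^ 2)) * A :=
        mul_le_mul hpow hbound (by positivity) (by positivity)
    _ = _ := mul_comm _ _

theorem abs_eval_iterate_derivative_le (p : ℝ[X]) {n : ℕ} (hn : 0 < n) (hdeg : p.natDegree ≤ n)
    {b d A : ℝ} (hdb : d < b) (hA : ∀ y ∈ Set.Icc (-b) b, |p.eval y| ≤ A) {x : ℝ}
    (hx : x ∈ Set.Icc (-d) d) (i : ℕ) :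
    |(derivative^[i] p).eval x| ≤ i.factorial * exp 1 * (4 * n / (b - d)) ^ i * A := by
  have hd : 0 ≤ d := by linarith [hx.1, hx.2]
  have hn' : (0 : ℝ) < n := Nat.cast_pos.mpr hn
  set δ := (b - d) / (4 * n) with hδ
  have hδ₀ : 0 < δ := div_pos (by linarith) (by positivity)
  have hδle : δ ≤ (b - d) / 4 := div_le_div_of_nonneg_left (by linarith) (by norm_num)
    (by linarith [(Nat.one_le_cast (α := ℝ)).mpr hn])
  have hsphere : ∀ z ∈ Metric.sphere (x : ℂ) δ, ‖aeval z p‖ ≤ A * exp 1 := by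
    intro z hz
    rw [mem_sphere_iff_norm] at hz
    have hre : |z.re - x| ≤ δ := by simpa [hz] using Complex.abs_re_le_norm (z - x)
    have him : |z.im| ≤ δ := by simpa [hz] using Complex.abs_im_le_norm (z - x)
    have hzre : |z.re| ≤ d + (b - d) / 4 := by
      linarith [abs_sub_abs_le_abs_sub z.re x, abs_le.mpr hx]
    have hsq : ((b - d) / 2) ^ 2 ≤ b ^ 2 - z.re ^ 2 := by
      nlinarith [sq_abs z.re, abs_nonneg z.re]
    refine (norm_aeval_le_mul_exp p hdeg hA (by linarith)).trans
      (mul_le_mul_of_nonneg_left (exp_le_exp.mpr ?_) ((abs_nonneg _).trans (hA x ?_)))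
    · have hpos : (0 : ℝ) < ((b - d) / 2) ^ 2 := by positivity
      rw [div_le_one (sqrt_pos.mpr (hpos.trans_le hsq))]
      calc 2 * n * |z.im| ≤ 2 * n * δ := by gcongr
        _ = (b - d) / 2 := by rw [hδ]; field_simp; ring
        _ ≤ √(b ^ 2 - z.re ^ 2) := le_sqrt_of_sq_le hsq
    · exact ⟨by linarith [hx.1], by linarith [hx.2]⟩
  have hcauchy := Complex.norm_iteratedDeriv_le_of_forall_mem_sphere_norm_le i hδ₀
    (Polynomial.differentiable_aeval p).diffContOnCl hsphere
  rw [iteratedDeriv_aeval, norm_aeval_ofReal] at hcauchy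
  refine hcauchy.trans_eq ?_
  rw [hδ, div_pow, div_div_eq_mul_div, div_pow]
  field_simp

theorem contDiffOn_of_hasDerivAt_iterate {𝕜 E : Type*} [NontriviallyNormedField 𝕜]
    [NormedAddCommGroup E] [NormedSpace 𝕜 E] {U : Set 𝕜} (hU : IsOpen U) {r : ℕ}
    {F : ℕ → 𝕜 → E} (hderiv : ∀ i < r, ∀ x ∈ U, HasDerivAt (F i) (F (i + 1) x) x)
    (hcont : ContinuousOn (F r) U) : ContDiffOn 𝕜 r (F 0) U := by
  induction r generalizing F with
  | zero => exact contDiffOn_zero.mpr hcont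
  | succ r ih =>
    have hF₀ : ∀ x ∈ U, HasDerivAt (F 0) (F 1 x) x := hderiv 0 r.succ_pos
    rw [Nat.cast_succ, contDiffOn_succ_iff_deriv_of_isOpen hU]
    refine ⟨fun x hx => (hF₀ x hx).differentiableAt.differentiableWithinAt, by simp, ?_⟩
    refine (ih (F := fun i => F (i + 1)) (fun i hi => hderiv (i + 1) (by omega)) hcont).congr ?_
    exact fun x hx => (hF₀ x hx).deriv

theorem contDiffOn_tsum_eval {U : Set ℝ} (hU : IsOpen U) (hU' : IsPreconnected U)
    (G : ℕ → ℝ[X]) (r : ℕ) {u : ℕ → ℕ → ℝ} (hu : ∀ i ≤ r, Summable (u i))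
    (hGu : ∀ i ≤ r, ∀ k, ∀ x ∈ U, ‖(derivative^[i] (G k)).eval x‖ ≤ u i k) :
    ContDiffOn ℝ r (fun x => ∑' k, (G k).eval x) U := by
  set F : ℕ → ℝ → ℝ := fun i x => ∑' k, (derivative^[i] (G k)).eval x
  have hderiv : ∀ i < r, ∀ x ∈ U, HasDerivAt (F i) (F (i + 1) x) x := by
    intro i hi x hx
    have hterm : ∀ k y, HasDerivAt (fun y => (derivative^[i] (G k)).eval y)
        ((derivative^[i + 1] (G k)).eval y) y := fun k y => by
      rw [Function.iterate_succ_apply']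
      exact Polynomial.hasDerivAt _ y
    exact hasDerivAt_tsum_of_isPreconnected (hu (i + 1) hi) hU hU' (fun k y _ => hterm k y)
      (hGu (i + 1) hi) hx (.of_norm_bounded (hu i hi.le) fun k => hGu i hi.le k x hx) hx
  have hcont : ContinuousOn (F r) U :=
    continuousOn_tsum (fun k => (Polynomial.continuous _).continuousOn) (hu r le_rfl)
      (hGu r le_rfl)
  exact contDiffOn_of_hasDerivAt_iterate hU hderiv hcont

theorem natCast_two_pow_rpow (k : ℕ) (s : ℝ) : ((2 ^ k : ℕ) : ℝ) ^ s = ((2 : ℝ) ^ s) ^ k := by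
  rw [Nat.cast_pow, Nat.cast_ofNat, ← rpow_natCast_mul zero_le_two, mul_comm,
    rpow_mul_natCast zero_le_two]

theorem tsum_sub_eq_of_tendsto {G : Type*} [AddCommGroup G] [TopologicalSpace G]
    [IsTopologicalAddGroup G] [T2Space G] {f : ℕ → G} {l : G}
    (hf : Filter.Tendsto f Filter.atTop (nhds l)) (hs : Summable fun k => f (k + 1) - f k) :
    ∑' k, (f (k + 1) - f k) = l - f 0 := by
  refine tendsto_nhds_unique hs.tendsto_sum_tsum_nat ?_
  simpa only [Finset.sum_range_sub] using hf.sub_const (f 0)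

section DyadicApproximation

variable {b s M : ℝ} {g : ℝ → ℝ} {P : ℕ → ℝ[X]}

theorem abs_sub_eval_two_pow_le
    (happrox : ∀ n : ℕ, 1 ≤ n → ∀ x ∈ Set.Icc (-b) b, |g x - (P n).eval x| ≤ M / (n : ℝ) ^ s)
    (k : ℕ) {x : ℝ} (hx : x ∈ Set.Icc (-b) b) :
    |g x - (P (2 ^ k)).eval x| ≤ M * ((2 : ℝ) ^ s)⁻¹ ^ k := by
  simpa only [natCast_two_pow_rpow, div_eq_mul_inv, inv_pow] using
    happrox (2 ^ k) Nat.one_le_two_pow x hx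

theorem abs_eval_sub_two_pow_le
    (happrox : ∀ n : ℕ, 1 ≤ n → ∀ x ∈ Set.Icc (-b) b, |g x - (P n).eval x| ≤ M / (n : ℝ) ^ s)
    (k : ℕ) {y : ℝ} (hy : y ∈ Set.Icc (-b) b) :
    |(P (2 ^ (k + 1)) - P (2 ^ k)).eval y|
      ≤ M * ((2 : ℝ) ^ s)⁻¹ ^ k + M * ((2 : ℝ) ^ s)⁻¹ ^ (k + 1) := by
  rw [eval_sub]
  calc _ = |(g y - (P (2 ^ k)).eval y) - (g y - (P (2 ^ (k + 1))).eval y)| := by ring_nf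
    _ ≤ _ := (abs_sub _ _).trans <|
      add_le_add (abs_sub_eval_two_pow_le happrox k hy) (abs_sub_eval_two_pow_le happrox (k + 1) hy)

theorem tendsto_eval_two_pow (hs : 0 < s)
    (happrox : ∀ n : ℕ, 1 ≤ n → ∀ x ∈ Set.Icc (-b) b, |g x - (P n).eval x| ≤ M / (n : ℝ) ^ s)
    {x : ℝ} (hx : x ∈ Set.Icc (-b) b) :
    Filter.Tendsto (fun N => (P (2 ^ N)).eval x) Filter.atTop (nhds (g x)) := by
  have hq : ((2 : ℝ) ^ s)⁻¹ < 1 := inv_lt_one_of_one_lt₀ (one_lt_rpow one_lt_two hs)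
  rw [tendsto_iff_norm_sub_tendsto_zero]
  refine squeeze_zero (g := fun N => M * ((2 : ℝ) ^ s)⁻¹ ^ N) (fun _ => norm_nonneg _)
    (fun N => ?_) ?_
  · rw [Real.norm_eq_abs, abs_sub_comm]
    exact abs_sub_eval_two_pow_le happrox N hx
  · simpa using (tendsto_pow_atTop_nhds_zero_of_lt_one (by positivity) hq).const_mul M

theorem eval_one_add_tsum_eval_sub_two_pow (hs : 0 < s)
    (happrox : ∀ n : ℕ, 1 ≤ n → ∀ x ∈ Set.Icc (-b) b, |g x - (P n).eval x| ≤ M / (n : ℝ) ^ s)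
    {x : ℝ} (hx : x ∈ Set.Icc (-b) b)
    (hsum : Summable fun k => (P (2 ^ (k + 1)) - P (2 ^ k)).eval x) :
    (P 1).eval x + ∑' k, (P (2 ^ (k + 1)) - P (2 ^ k)).eval x = g x := by
  simp only [eval_sub] at hsum ⊢
  rw [tsum_sub_eq_of_tendsto (tendsto_eval_two_pow hs happrox hx) hsum, pow_zero, add_sub_cancel]

theorem contDiffOn_Ioo_of_approx {d : ℝ} (hdb : d < b) {r : ℕ} (hrs : (r : ℝ) < s)
    (hdeg : ∀ n : ℕ, (P n).natDegree ≤ n)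
    (happrox : ∀ n : ℕ, 1 ≤ n → ∀ x ∈ Set.Icc (-b) b, |g x - (P n).eval x| ≤ M / (n : ℝ) ^ s) :
    ContDiffOn ℝ r g (Set.Ioo (-d) d) := by
  set q := ((2 : ℝ) ^ s)⁻¹
  have hq₀ : 0 < q := inv_pos.mpr (rpow_pos_of_pos two_pos s)
  have hsub : Set.Ioo (-d) d ⊆ Set.Icc (-b) b :=
    Set.Ioo_subset_Icc_self.trans (Set.Icc_subset_Icc (by linarith) hdb.le)
  set G : ℕ → ℝ[X] := fun k => P (2 ^ (k + 1)) - P (2 ^ k)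
  have hGdeg : ∀ k, (G k).natDegree ≤ 2 ^ (k + 1) := fun k =>
    (natDegree_sub_le _ _).trans <| max_le (hdeg _) <|
      (hdeg _).trans (Nat.pow_le_pow_right two_pos k.le_succ)
  set u : ℕ → ℕ → ℝ := fun i k => i.factorial * exp 1 *
    (4 * ((2 ^ (k + 1) : ℕ) : ℝ) / (b - d)) ^ i * (M * q ^ k + M * q ^ (k + 1))
  have hGu : ∀ i ≤ r, ∀ k, ∀ x ∈ Set.Ioo (-d) d, ‖(derivative^[i] (G k)).eval x‖ ≤ u i k :=
    fun i _ k x hx => (Real.norm_eq_abs _).trans_le <| abs_eval_iterate_derivative_le _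
      (by positivity) (hGdeg k) hdb (fun y hy => abs_eval_sub_two_pow_le happrox k hy)
      (Set.Ioo_subset_Icc_self hx) i
  have hu : ∀ i ≤ r, Summable (u i) := by
    intro i hi
    have hratio : 2 ^ i * q < 1 := by
      rw [← div_eq_mul_inv, div_lt_one (rpow_pos_of_pos two_pos s), ← rpow_natCast]
      exact rpow_lt_rpow_of_exponent_lt one_lt_two ((Nat.cast_le.mpr hi).trans_lt hrs)
    refine ((summable_geometric_of_lt_one (by positivity) hratio).mul_left
      (i.factorial * exp 1 * (8 / (b - d)) ^ i * (M * (1 + q)))).congr fun k => ?_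
    simp only [u]
    push_cast
    ring
  have hP₁ : ContDiff ℝ r fun x => (P 1).eval x := by
    simpa only [coe_aeval_eq_eval] using (P 1).contDiff_aeval (𝕜 := ℝ) r
  refine (hP₁.contDiffOn.add
    (contDiffOn_tsum_eval isOpen_Ioo isPreconnected_Ioo G r hu hGu)).congr fun x hx => ?_
  refine (eval_one_add_tsum_eval_sub_two_pow ((Nat.cast_nonneg r).trans_lt hrs) happrox
    (hsub hx) ?_).symm
  exact .of_norm_bounded (hu 0 r.zero_le) fun k => hGu 0 r.zero_le k x hx

end DyadicApproximation

theorem stmt_19_general (b : ℝ) (r : ℕ) (M ε : ℝ) (hε : 0 < ε)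
    (g : ℝ → ℝ)
    (P : ℕ → Polynomial ℝ) (hdeg : ∀ n : ℕ, (P n).natDegree ≤ n)
    (happrox : ∀ n : ℕ, 1 ≤ n → ∀ x ∈ Set.Icc (-b) b,
        |g x - (P n).eval x| ≤ M / (n : ℝ) ^ ((r : ℝ) + ε)) :
    ContDiffOn ℝ (r : ℕ∞) g (Set.Ioo (-b) b) := by
  refine contDiffOn_of_locally_contDiffOn fun x hx => ?_
  obtain ⟨d, hxd, hdb⟩ := exists_between (abs_lt.mpr hx)
  refine ⟨Set.Ioo (-d) d, isOpen_Ioo, abs_lt.mp hxd, ?_⟩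
  exact (contDiffOn_Ioo_of_approx hdb (by linarith) hdeg happrox).mono
    Set.inter_subset_right

/-- Inverse approximation theorem (analytic core): if `h̃ ∈ C[-b,b]` and there
are polynomials `P_n` of degree `≤ n` with `‖h̃ - P_n‖_∞ ≤ M̃/n^{r+ε}` for all
`n ≥ 1`, then `h̃ ∈ C^r(-b,b)`. -/
theorem stmt_19 (b : ℝ) (hb : 0 < b) (r : ℕ) (M ε : ℝ) (hM : 0 < M) (hε : 0 < ε)
    (g : ℝ → ℝ) (hg : ContinuousOn g (Set.Icc (-b) b))
    (P : ℕ → Polynomial ℝ) (hdeg : ∀ n : ℕ, (P n).natDegree ≤ n)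
    (happrox : ∀ n : ℕ, 1 ≤ n → ∀ x ∈ Set.Icc (-b) b,
        |g x - (P n).eval x| ≤ M / (n : ℝ) ^ ((r : ℝ) + ε)) :
    ContDiffOn ℝ (r : ℕ∞) g (Set.Ioo (-b) b) :=
  stmt_19_general b r M ε hε g P hdeg happrox
end
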